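/- arXiv:2401.17578 — 5 statements merged into one kernel-verified Lean document; each statement's English description precedes it below -/
import Mathlib

section
/- Let X be a set equipped with a partial order ≥_X and let ρ be a binary choice rule on X. If ρ satisfies Moderate Transitivity and Dominance with respect to ≥_X, then ρ satisfies Monotonicity with respect to ≥_X: whenever x' ≥_X x, one has ρ(x',y) ≥ ρ(x,y) for every y ∈ X, and the inequality is strict whenever ¬(x ≥_X x'), ¬(x ≥_X y), and ¬(y ≥_X x). -/
/-- If a binary choice rule satisfies Moderate Transitivity and Dominance
with respect to a partial order, then it satisfies Monotonicity with respect to it. -/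
theorem stmt_0 {X : Type*} [PartialOrder X] (ρ : X → X → ℝ)
    (hrange : ∀ x y, ρ x y ∈ Set.Icc (0:ℝ) 1)
    (hsymm : ∀ x y, ρ x y = 1 - ρ y x)
    (hMT : ∀ x y z, 1/2 ≤ ρ x y → 1/2 ≤ ρ y z →
      min (ρ x y) (ρ y z) < ρ x z ∨ (ρ x z = ρ x y ∧ ρ x z = ρ y z))
    (hDom : ∀ x y, y ≤ x → x ≠ y → ∀ w z : X,
      ρ w z ≤ ρ x y ∧ (¬ z ≤ w → ρ w z < ρ x y)) :
    ∀ x x' y : X, x ≤ x' →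
      ρ x y ≤ ρ x' y ∧ (¬ x' ≤ x → ¬ y ≤ x → ¬ x ≤ y → ρ x y < ρ x' y) := by
  intro x x' y hle
  rcases eq_or_ne x x' with rfl | hne
  · exact ⟨le_refl _, fun h _ _ => absurd (le_refl x) h⟩
  have hne' : x' ≠ x := fun h => hne h.symm
  have hdom := hDom x' x hle hne'
  -- ρ x' x ≥ 1/2
  have hhalf : (1:ℝ)/2 ≤ ρ x' x := by
    have h1 := (hdom x x').1
    have h2 := hsymm x x'
    linarith
  -- non-strict part
  have hns : ρ x y ≤ ρ x' y := by
    rcases le_or_gt (1/2 : ℝ) (ρ x y) with hxy | hxy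
    · rcases hMT x' x y hhalf hxy with h | ⟨h1, h2⟩
      · have : min (ρ x' x) (ρ x y) = ρ x y := min_eq_right ((hdom x y).1)
        linarith [this ▸ h]
      · linarith
    · rcases le_or_gt (1/2 : ℝ) (ρ x' y) with h' | h'
      · linarith
      · have hyx' : (1:ℝ)/2 ≤ ρ y x' := by
          have := hsymm y x'; linarith
        rcases hMT y x' x hyx' hhalf with h | ⟨h1, h2⟩
        · have hmin : min (ρ y x') (ρ x' x) = ρ y x' := min_eq_left ((hdom y x').1)
          have := hsymm x y; have := hsymm x' y
          rw [hmin] at h; linarith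
        · have := hsymm x y; have := hsymm x' y
          linarith
  refine ⟨hns, fun hxx hyx hxy => ?_⟩
  -- strict part
  have hstr1 : ρ x y < ρ x' x := (hdom x y).2 hyx
  have hx'y : ¬ x' ≤ y := fun h => hxy (le_trans hle h)
  have hstr2 : ρ y x' < ρ x' x := (hdom y x').2 hx'y
  clear hxx hyx hxy hx'y
  rcases le_or_gt (1/2 : ℝ) (ρ x y) with hxy2 | hxy2
  · rcases hMT x' x y hhalf hxy2 with h | ⟨h1, h2⟩
    · have : min (ρ x' x) (ρ x y) = ρ x y := min_eq_right ((hdom x y).1)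
      linarith [this ▸ h]
    · linarith
  · rcases le_or_gt (1/2 : ℝ) (ρ x' y) with h' | h'
    · linarith
    · have hyx' : (1:ℝ)/2 ≤ ρ y x' := by
        have := hsymm y x'; linarith
      rcases hMT y x' x hyx' hhalf with h | ⟨h1, h2⟩
      · have hmin : min (ρ y x') (ρ x' x) = ρ y x' := le_of_lt hstr2 |> min_eq_left
        have := hsymm x y; have := hsymm x' y
        rw [hmin] at h; linarith
      · linarith
end

section
/- Let X be a real vector space and ρ a binary choice rule on X satisfying Moderate Transitivity and Linearity. Then ρ is superadditive: for any x, y, x', y' ∈ X with ρ(x,y) ≥ 1/2 and ρ(x',y') ≥ 1/2, and any λ ∈ [0,1], one has ρ(λx + (1−λ)x', λy + (1−λ)y') ≥ min{ρ(x,y), ρ(x',y')}. -/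
/-- On a real vector space, a binary choice rule satisfying Moderate
Transitivity and Linearity is superadditive. -/
theorem stmt_1 {X : Type*} [AddCommGroup X] [Module ℝ X] (ρ : X → X → ℝ)
    (hrange : ∀ x y, ρ x y ∈ Set.Icc (0:ℝ) 1)
    (hsymm : ∀ x y, ρ x y = 1 - ρ y x)
    (hMT : ∀ x y z, 1/2 ≤ ρ x y → 1/2 ≤ ρ y z →
      min (ρ x y) (ρ y z) < ρ x z ∨ (ρ x z = ρ x y ∧ ρ x z = ρ y z))
    (hLin : ∀ (x y z : X) (α : ℝ), 0 < α → α < 1 →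
      ρ x y = ρ (α • x + (1 - α) • z) (α • y + (1 - α) • z)) :
    ∀ x y x' y' : X, 1/2 ≤ ρ x y → 1/2 ≤ ρ x' y' → ∀ l : ℝ, 0 ≤ l → l ≤ 1 →
      min (ρ x y) (ρ x' y') ≤ ρ (l • x + (1 - l) • x') (l • y + (1 - l) • y') := by
  intro x y x' y' hxy hx'y' l hl0 hl1
  rcases eq_or_lt_of_le hl0 with h0 | h0
  · subst h0; simp [min_le_right (ρ x y) (ρ x' y')]
  rcases eq_or_lt_of_le hl1 with h1 | h1
  · subst h1; simp [min_le_left (ρ x y) (ρ x' y')]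
  set z := l • x + (1 - l) • x' with hz
  set m := l • y + (1 - l) • x' with hm
  set w := l • y + (1 - l) • y' with hw
  have e1 : ρ x y = ρ z m := hLin x y x' l h0 h1
  have e2 : ρ x' y' = ρ m w := by
    have := hLin x' y' y (1 - l) (by linarith) (by linarith)
    simpa [add_comm, sub_sub_cancel] using this
  have h1' : (1:ℝ)/2 ≤ ρ z m := e1 ▸ hxy
  have h2' : (1:ℝ)/2 ≤ ρ m w := e2 ▸ hx'y'
  rcases hMT z m w h1' h2' with h | ⟨ha, hb⟩
  · rw [e1, e2]; exact le_of_lt h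
  · rw [e1, e2, ← ha, ← hb]; simp
end

section
/- Let n > 2 and let ρ be a binary choice rule on ℝⁿ satisfying M1–M5 in which every attribute is non-null, and suppose in addition that the induced stochastic order is represented by U(x) = Σ_k x_k, i.e. ρ(x,y) ≥ 1/2 if and only if Σ_k x_k ≥ Σ_k y_k (for x ≠ y). Then for every z ∈ ℝⁿ with z ≠ 0 and Σ_k z_k ≥ 0, one has ρ(z, 0) = ρ(d⁺(z)·e₁ − d⁻(z)·e₂, 0), where d⁺(z) = Σ_{k : z_k ≥ 0} z_k, d⁻(z) = Σ_{k : z_k < 0} |z_k|, and e₁, e₂ are the first two standard basis vectors of ℝⁿ. -/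
open Finset

variable {n : ℕ}

/-- A binary choice rule: values in [0,1] with ρ(x,y) = 1 - ρ(y,x). -/
def IsBCR {X : Type*} (ρ : X → X → ℝ) : Prop :=
  (∀ x y, ρ x y ∈ Set.Icc (0:ℝ) 1) ∧ ∀ x y, ρ x y = 1 - ρ y x

/-- M1 (Continuity). -/
def M1 (ρ : (Fin n → ℝ) → (Fin n → ℝ) → ℝ) : Prop :=
  ContinuousOn (fun p : (Fin n → ℝ) × (Fin n → ℝ) => ρ p.1 p.2) {p | p.1 ≠ p.2}

/-- M2 (Linearity). -/
def M2 (ρ : (Fin n → ℝ) → (Fin n → ℝ) → ℝ) : Prop :=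
  ∀ (x y z : Fin n → ℝ) (α : ℝ), 0 < α → α < 1 →
    ρ x y = ρ (α • x + (1 - α) • z) (α • y + (1 - α) • z)

/-- M3 (Moderate Transitivity). -/
def M3 {X : Type*} (ρ : X → X → ℝ) : Prop :=
  ∀ x y z, 1/2 ≤ ρ x y → 1/2 ≤ ρ y z →
    min (ρ x y) (ρ y z) < ρ x z ∨ (ρ x z = ρ x y ∧ ρ x z = ρ y z)

/-- The revealed dominance relation x >_D y. -/
def DomD (ρ : (Fin n → ℝ) → (Fin n → ℝ) → ℝ) (x y : Fin n → ℝ) : Prop :=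
  (∀ k, 1/2 ≤ ρ (Function.update y k (x k)) y) ∧
  ∃ k, 1/2 < ρ (Function.update y k (x k)) y

/-- M4 (Dominance). -/
def M4 (ρ : (Fin n → ℝ) → (Fin n → ℝ) → ℝ) : Prop :=
  ∀ x y, DomD ρ x y → ∀ w z, ρ w z ≤ ρ x y ∧ (¬ DomD ρ w z → ρ w z < ρ x y)

/-- M5 (Simplification). -/
def M5 (ρ : (Fin n → ℝ) → (Fin n → ℝ) → ℝ) : Prop :=
  ∀ x y x' : Fin n → ℝ, 1/2 ≤ ρ x y →
    (∃ i, x' i = y i ∧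
      ∀ j j', j ≠ i → j' ≠ i → x' j ≠ x j → x' j' ≠ x j' → j = j') →
    ρ x' x = 1/2 → ρ x y ≤ ρ x' y

/-- Attribute k is null. -/
def NullAttr (ρ : (Fin n → ℝ) → (Fin n → ℝ) → ℝ) (k : Fin n) : Prop :=
  ∀ x y z : Fin n → ℝ,
    ρ (Function.update z k (x k)) (Function.update z k (y k)) = 1/2

/-- L1-complexity representation (G, β). -/
def IsL1Rep (ρ : (Fin n → ℝ) → (Fin n → ℝ) → ℝ) (G : ℝ → ℝ) (β : Fin n → ℝ) : Prop :=
  (∀ k, β k ≠ 0) ∧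
  ContinuousOn G (Set.Icc (-1) 1) ∧
  StrictMonoOn G (Set.Icc (-1) 1) ∧
  (∀ r ∈ Set.Icc (-1:ℝ) 1, G r ∈ Set.Icc (0:ℝ) 1 ∧ G r = 1 - G (-r)) ∧
  ∀ x y : Fin n → ℝ, x ≠ y →
    ρ x y = G ((∑ k, β k * x k - ∑ k, β k * y k) / ∑ k, |β k * (x k - y k)|)

/-!
By M2, `ρ x y = ρ (x - y) 0` and `ρ (c • d) 0 = ρ d 0` for `c > 0`. Moving the value of a
coordinate `i` onto another coordinate `j` keeps the coordinate sum, so the sum representation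
makes the new vector indifferent to the old one and M5 says this can only raise `ρ (·) 0`. If
`r i` and `r j` have the same sign, `r` is a convex combination of the two transfers `i → j` and
`j → i`, and M3 turns both inequalities into equalities; moving a value onto a zero coordinate
is two such merges through the midpoint. Merging coordinates of equal sign leaves one positive
coordinate carrying `d⁺(z)` and one negative coordinate carrying `-d⁻(z)`, and with `n > 2` a
free third coordinate lets these be relocated to the first two.
-/

namespace M2

variable {ρ : (Fin n → ℝ) → (Fin n → ℝ) → ℝ}

theorem rho_smul_of_lt_one (h : M2 ρ) (d : Fin n → ℝ) {c : ℝ} (hc₀ : 0 < c) (hc₁ : c < 1) :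
    ρ (c • d) 0 = ρ d 0 := by
  simpa using (h d 0 0 c hc₀ hc₁).symm

theorem rho_smul (h : M2 ρ) (d : Fin n → ℝ) {c : ℝ} (hc : 0 < c) : ρ (c • d) 0 = ρ d 0 := by
  rcases lt_trichotomy c 1 with hc₁ | rfl | hc₁
  · exact h.rho_smul_of_lt_one d hc hc₁
  · rw [one_smul]
  · have := h.rho_smul_of_lt_one (c • d) (inv_pos.2 hc) (inv_lt_one_of_one_lt₀ hc₁)
    rwa [inv_smul_smul₀ hc.ne', eq_comm] at this

theorem rho_eq_rho_sub (h : M2 ρ) (x y : Fin n → ℝ) : ρ x y = ρ (x - y) 0 := by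
  have := h x y (-y) (1 / 2) (by norm_num) (by norm_num)
  rw [this, ← h.rho_smul (x - y) (c := 1 / 2) (by norm_num)]
  congr 1
  · module
  · module

end M2

section

variable {ρ : (Fin n → ℝ) → (Fin n → ℝ) → ℝ}

/-- M3 on the chain `t • A + (1 - t) • B`, `(1 - t) • B`, `0`, whose two links are `ρ A 0` and
`ρ B 0` by M2. -/
theorem rho_convex_comb_eq_of_le (hM2 : M2 ρ) (hM3 : M3 ρ) {A B : Fin n → ℝ} {t : ℝ}
    (ht₀ : 0 < t) (ht₁ : t < 1) (hA : 1 / 2 ≤ ρ A 0) (hB : 1 / 2 ≤ ρ B 0)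
    (hle : ρ (t • A + (1 - t) • B) 0 ≤ min (ρ A 0) (ρ B 0)) :
    ρ (t • A + (1 - t) • B) 0 = ρ A 0 := by
  have hx : ρ (t • A + (1 - t) • B) ((1 - t) • B) = ρ A 0 := by
    rw [hM2.rho_eq_rho_sub, add_sub_cancel_right, hM2.rho_smul A ht₀]
  have hy : ρ ((1 - t) • B) 0 = ρ B 0 := hM2.rho_smul B (sub_pos.2 ht₁)
  rcases hM3 _ _ 0 (hx ▸ hA) (hy ▸ hB) with hlt | ⟨heq, -⟩
  · rw [hx, hy] at hlt
    exact absurd hle (not_le.2 hlt)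
  · rwa [hx] at heq

def RepresentedBySum (ρ : (Fin n → ℝ) → (Fin n → ℝ) → ℝ) : Prop :=
  ∀ x y : Fin n → ℝ, x ≠ y → (1 / 2 ≤ ρ x y ↔ ∑ k, y k ≤ ∑ k, x k)

theorem RepresentedBySum.half_le_rho_zero (hU : RepresentedBySum ρ) {r : Fin n → ℝ} (hr : r ≠ 0)
    (hs : 0 ≤ ∑ k, r k) : 1 / 2 ≤ ρ r 0 :=
  (hU r 0 hr).2 (by simpa using hs)

theorem RepresentedBySum.rho_eq_half (hρ : ∀ x y, ρ x y = 1 - ρ y x) (hU : RepresentedBySum ρ)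
    {x y : Fin n → ℝ} (hne : x ≠ y) (hs : ∑ k, x k = ∑ k, y k) : ρ x y = 1 / 2 := by
  have h₁ := (hU x y hne).2 hs.ge
  have h₂ := (hU y x hne.symm).2 hs.le
  linarith [hρ x y]

end

def transfer (i j : Fin n) (r : Fin n → ℝ) : Fin n → ℝ :=
  Function.update (Function.update r i 0) j (r i + r j)

section transfer

variable {i j : Fin n} {r : Fin n → ℝ}

theorem transfer_apply (i j : Fin n) (r : Fin n → ℝ) (k : Fin n) :
    transfer i j r k = if k = j then r i + r j else if k = i then 0 else r k := by
  simp only [transfer, Function.update_apply]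

@[simp] theorem transfer_apply_self_left (hij : i ≠ j) : transfer i j r i = 0 := by
  simp [transfer_apply, hij]

@[simp] theorem transfer_apply_self_right : transfer i j r j = r i + r j := by
  simp [transfer_apply]

theorem transfer_apply_of_ne (k : Fin n) (hki : k ≠ i) (hkj : k ≠ j) : transfer i j r k = r k := by
  simp [transfer_apply, hki, hkj]

theorem transfer_of_apply_eq_zero (hi : r i = 0) : transfer i j r = r := by
  ext k
  rcases eq_or_ne k j with rfl | hkj
  · simp [hi]
  · rcases eq_or_ne k i with rfl | hki
    · simp [hkj, hi]
    · exact transfer_apply_of_ne k hki hkj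

theorem sum_comp_transfer (hij : i ≠ j) (g : ℝ → ℝ) (hg₀ : g 0 = 0)
    (hg : g (r i + r j) = g (r i) + g (r j)) :
    ∑ k, g (transfer i j r k) = ∑ k, g (r k) := by
  have hdiff := Fintype.sum_eq_add (f := fun k => g (transfer i j r k) - g (r k)) i j hij
    (fun k hk => by simp [transfer_apply_of_ne k hk.1 hk.2])
  rw [Finset.sum_sub_distrib] at hdiff
  simp only [transfer_apply_self_left hij, transfer_apply_self_right, hg₀, hg] at hdiff
  linarith

theorem sum_transfer (hij : i ≠ j) : ∑ k, transfer i j r k = ∑ k, r k :=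
  sum_comp_transfer hij id rfl rfl

end transfer

section merge

variable {ρ : (Fin n → ℝ) → (Fin n → ℝ) → ℝ} {i j : Fin n} {r : Fin n → ℝ}

theorem rho_le_rho_transfer (hρ : ∀ x y, ρ x y = 1 - ρ y x) (hM5 : M5 ρ)
    (hU : RepresentedBySum ρ) (hij : i ≠ j) (hi : r i ≠ 0) (hs : 0 ≤ ∑ k, r k) :
    ρ r 0 ≤ ρ (transfer i j r) 0 := by
  have hr : r ≠ 0 := fun h => hi (by simp [h])
  have hne : transfer i j r ≠ r := fun h =>
    hi (by rw [← congrFun h i, transfer_apply_self_left hij])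
  refine hM5 r 0 _ (hU.half_le_rho_zero hr hs) ⟨i, by simp [hij], ?_⟩
    (hU.rho_eq_half hρ hne (sum_transfer hij))
  have only_j : ∀ k, k ≠ i → transfer i j r k ≠ r k → k = j := fun k hki hk => by
    by_contra hkj
    exact hk (transfer_apply_of_ne k hki hkj)
  intro k k' hki hk'i hk hk'
  rw [only_j k hki hk, only_j k' hk'i hk']

theorem rho_transfer_eq_of_mul_pos (hρ : ∀ x y, ρ x y = 1 - ρ y x) (hM2 : M2 ρ) (hM3 : M3 ρ)
    (hM5 : M5 ρ) (hU : RepresentedBySum ρ) (hij : i ≠ j) (hsame : 0 < r i * r j)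
    (hs : 0 ≤ ∑ k, r k) : ρ (transfer i j r) 0 = ρ r 0 := by
  set s := r i + r j
  obtain ⟨hj_div, hi_div⟩ : 0 < r j / s ∧ 0 < r i / s := by
    rcases pos_and_pos_or_neg_and_neg_of_mul_pos hsame with ⟨hi, hj⟩ | ⟨hi, hj⟩
    · exact ⟨div_pos hj (by positivity), div_pos hi (by positivity)⟩
    · exact ⟨div_pos_of_neg_of_neg hj (by linarith), div_pos_of_neg_of_neg hi (by linarith)⟩
  have hs₀ : s ≠ 0 := fun h => by simp [h] at hj_div
  have hi : r i ≠ 0 := fun h => by simp [h] at hi_div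
  have hj : r j ≠ 0 := fun h => by simp [h] at hj_div
  have hcomb : r = (r j / s) • transfer i j r + (1 - r j / s) • transfer j i r := by
    ext k
    simp only [Pi.add_apply, Pi.smul_apply, smul_eq_mul, transfer_apply]
    rcases eq_or_ne k i with rfl | hki
    · simp only [if_neg hij, if_true]
      field_simp
      ring
    · rcases eq_or_ne k j with rfl | hkj
      · simp only [if_neg hij.symm, if_true]
        field_simp
        ring
      · simp only [if_neg hki, if_neg hkj]
        ring
  have hA : transfer i j r ≠ 0 := fun h => hs₀ (by simpa using congrFun h j)
  have hB : transfer j i r ≠ 0 := fun h => hs₀ (by simpa [add_comm] using congrFun h i)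
  have ht_lt_one : r j / s < 1 := by
    have : r j / s + r i / s = 1 := by rw [← add_div, add_comm, div_self hs₀]
    linarith
  have key := rho_convex_comb_eq_of_le hM2 hM3 hj_div ht_lt_one
    (hU.half_le_rho_zero hA (by rwa [sum_transfer hij]))
    (hU.half_le_rho_zero hB (by rwa [sum_transfer hij.symm]))
    (hcomb ▸ le_min (rho_le_rho_transfer hρ hM5 hU hij hi hs)
      (rho_le_rho_transfer hρ hM5 hU hij.symm hj hs))
  rw [← hcomb] at key
  exact key.symm

theorem rho_transfer_eq_of_apply_eq_zero (hρ : ∀ x y, ρ x y = 1 - ρ y x) (hM2 : M2 ρ)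
    (hM3 : M3 ρ) (hM5 : M5 ρ) (hU : RepresentedBySum ρ) (hij : i ≠ j) (hj : r j = 0)
    (hs : 0 ≤ ∑ k, r k) : ρ (transfer i j r) 0 = ρ r 0 := by
  by_cases hi : r i = 0
  · rw [transfer_of_apply_eq_zero hi]
  set m : Fin n → ℝ := fun k => (r k + transfer i j r k) / 2
  have hmi : m i = r i / 2 := by simp only [m, transfer_apply_self_left hij, add_zero]
  have hmj : m j = r i / 2 := by simp only [m, transfer_apply_self_right, hj, zero_add, add_zero]
  have hm_off : ∀ k, k ≠ i → k ≠ j → m k = r k := fun k hki hkj => by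
    simp only [m, transfer_apply_of_ne k hki hkj]
    ring
  have hm_sum : ∑ k, m k = ∑ k, r k := by
    simp only [m, ← Finset.sum_div, Finset.sum_add_distrib, sum_transfer hij]
    ring
  have hm_sign : 0 < m i * m j := by
    rw [hmi, hmj]
    exact mul_self_pos.2 (div_ne_zero hi two_ne_zero)
  have hm_ij : transfer i j m = transfer i j r := by
    ext k
    rcases eq_or_ne k j with rfl | hkj
    · simp [hmi, hmj, hj]
    · rcases eq_or_ne k i with rfl | hki
      · simp [hij]
      · rw [transfer_apply_of_ne k hki hkj, transfer_apply_of_ne k hki hkj, hm_off k hki hkj]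
  have hm_ji : transfer j i m = r := by
    ext k
    rcases eq_or_ne k i with rfl | hki
    · simp [hmi, hmj]
    · rcases eq_or_ne k j with rfl | hkj
      · simp [hij.symm, hj]
      · rw [transfer_apply_of_ne k hkj hki, hm_off k hki hkj]
  rw [← hm_sum] at hs
  calc ρ (transfer i j r) 0 = ρ m 0 := by
        rw [← hm_ij, rho_transfer_eq_of_mul_pos hρ hM2 hM3 hM5 hU hij hm_sign hs]
    _ = ρ r 0 := by
        rw [← hm_ji, rho_transfer_eq_of_mul_pos hρ hM2 hM3 hM5 hU hij.symm (by linarith) hs]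

end merge

-- `d⁺(r)` and `d⁻(r)` of the statement.
noncomputable def dPos (r : Fin n → ℝ) : ℝ := ∑ k, if 0 ≤ r k then r k else 0

noncomputable def dNeg (r : Fin n → ℝ) : ℝ := ∑ k, if r k < 0 then -r k else 0

section support

variable {i j p q : Fin n} {r : Fin n → ℝ}

theorem dPos_transfer (hij : i ≠ j) (hsame : 0 < r i * r j) : dPos (transfer i j r) = dPos r :=
  sum_comp_transfer hij (fun t => if 0 ≤ t then t else 0) (by simp) <| by
    rcases pos_and_pos_or_neg_and_neg_of_mul_pos hsame with ⟨hi, hj⟩ | ⟨hi, hj⟩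
    · simp [hi.le, hj.le, add_nonneg hi.le hj.le]
    · simp [not_le.2 hi, not_le.2 hj, not_le.2 (add_neg hi hj)]

theorem dNeg_transfer (hij : i ≠ j) (hsame : 0 < r i * r j) : dNeg (transfer i j r) = dNeg r :=
  sum_comp_transfer hij (fun t => if t < 0 then -t else 0) (by simp) <| by
    rcases pos_and_pos_or_neg_and_neg_of_mul_pos hsame with ⟨hi, hj⟩ | ⟨hi, hj⟩
    · simp [not_lt.2 hi.le, not_lt.2 hj.le, not_lt.2 (add_pos hi hj).le]
    · simp only [hi, hj, add_neg hi hj, if_true]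
      ring

theorem card_support_transfer_lt (hij : i ≠ j) (hi : r i ≠ 0) (hj : r j ≠ 0) :
    #{k | transfer i j r k ≠ 0} < #{k | r k ≠ 0} := by
  refine Finset.card_lt_card
    ((Finset.ssubset_iff_of_subset ?_).2 ⟨i, by simpa using hi, by simp [hij]⟩)
  intro k
  simp only [Finset.mem_filter, Finset.mem_univ, true_and]
  rcases eq_or_ne k j with rfl | hkj
  · exact fun _ => hj
  · rcases eq_or_ne k i with rfl | hki
    · exact fun _ => hi
    · rw [transfer_apply_of_ne k hki hkj]
      exact id

theorem sum_comp_single_add_single (hpq : p ≠ q) (g : ℝ → ℝ) (hg₀ : g 0 = 0) (a b : ℝ) :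
    ∑ k, g ((Pi.single p a + Pi.single q b : Fin n → ℝ) k) = g a + g b := by
  rw [Fintype.sum_eq_add p q hpq (fun k hk => by simp [hk.1, hk.2, hg₀])]
  simp [hpq, hpq.symm]

theorem sum_single_add_single (hpq : p ≠ q) (a b : ℝ) :
    ∑ k, (Pi.single p a + Pi.single q b : Fin n → ℝ) k = a + b :=
  sum_comp_single_add_single hpq id rfl a b

theorem dPos_single_add_single (hpq : p ≠ q) {a b : ℝ} (ha : 0 ≤ a) (hb : b ≤ 0) :
    dPos (Pi.single p a + Pi.single q b) = a := by
  rw [dPos, sum_comp_single_add_single hpq (fun t => if 0 ≤ t then t else 0) (by simp)]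
  rcases hb.lt_or_eq with hb | rfl
  · simp [ha, not_le.2 hb]
  · simp [ha]

theorem dNeg_single_add_single (hpq : p ≠ q) {a b : ℝ} (ha : 0 ≤ a) (hb : b ≤ 0) :
    dNeg (Pi.single p a + Pi.single q b) = -b := by
  rw [dNeg, sum_comp_single_add_single hpq (fun t => if t < 0 then -t else 0) (by simp)]
  rcases hb.lt_or_eq with hb | rfl
  · simp [not_lt.2 ha, hb]
  · simp [not_lt.2 ha]

theorem transfer_single_add_single (hpq : p ≠ q) {c : Fin n} (hcp : c ≠ p) (hcq : c ≠ q) (a b : ℝ) :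
    transfer p c (Pi.single p a + Pi.single q b) = Pi.single c a + Pi.single q b := by
  ext k
  simp only [transfer_apply, Pi.add_apply, Pi.single_apply]
  split_ifs <;> simp_all

end support

theorem exists_eq_single_add_single (hn : 1 < n) {r : Fin n → ℝ} (hs : 0 ≤ ∑ k, r k)
    (hr : ∀ i j, i ≠ j → r i * r j ≤ 0) :
    ∃ p q, p ≠ q ∧ 0 ≤ r p ∧ r q ≤ 0 ∧ r = Pi.single p (r p) + Pi.single q (r q) := by
  have : Nontrivial (Fin n) := Fin.nontrivial_iff_two_le.2 hn
  obtain ⟨p, -, hmax⟩ := Finset.exists_max_image Finset.univ r Finset.univ_nonempty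
  have hp : 0 ≤ r p := by
    obtain ⟨k, -, hk⟩ := Finset.exists_le_of_sum_le (f := fun _ => 0) (g := r)
      Finset.univ_nonempty (by simpa using hs)
    exact hk.trans (hmax k (Finset.mem_univ k))
  have hnonpos : ∀ k, k ≠ p → r k ≤ 0 := fun k hk => by
    by_contra! hpos
    nlinarith [hr k p hk, hmax k (Finset.mem_univ k)]
  obtain ⟨q, hqp, hzero⟩ : ∃ q, q ≠ p ∧ ∀ k, k ≠ p → k ≠ q → r k = 0 := by
    by_cases hneg : ∃ q, r q < 0
    · obtain ⟨q, hq⟩ := hneg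
      refine ⟨q, fun h => by linarith [h ▸ hq], fun k hkp hkq => ?_⟩
      nlinarith [hr k q hkq, hnonpos k hkp]
    · push Not at hneg
      obtain ⟨q, hqp⟩ := exists_ne p
      exact ⟨q, hqp, fun k hkp _ => le_antisymm (hnonpos k hkp) (hneg k)⟩
  refine ⟨p, q, hqp.symm, hp, hnonpos q hqp, ?_⟩
  ext k
  rcases eq_or_ne k p with rfl | hkp
  · simp [hqp.symm]
  · rcases eq_or_ne k q with rfl | hkq
    · simp [hkp]
    · simp [hkp, hkq, hzero k hkp hkq]

section relocation

variable {ρ : (Fin n → ℝ) → (Fin n → ℝ) → ℝ} {p q p' q' : Fin n} {a b : ℝ}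

theorem rho_single_add_single_congr_left (hρ : ∀ x y, ρ x y = 1 - ρ y x) (hM2 : M2 ρ)
    (hM3 : M3 ρ) (hM5 : M5 ρ) (hU : RepresentedBySum ρ) (hpq : p ≠ q) (hp'q : p' ≠ q)
    (hab : 0 ≤ a + b) :
    ρ (Pi.single p a + Pi.single q b) 0 = ρ (Pi.single p' a + Pi.single q b) 0 := by
  rcases eq_or_ne p' p with rfl | hp'p
  · rfl
  rw [← transfer_single_add_single hpq hp'p hp'q,
    rho_transfer_eq_of_apply_eq_zero hρ hM2 hM3 hM5 hU hp'p.symm (by simp [hp'p, hp'q])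
      (by rwa [sum_single_add_single hpq])]

theorem rho_single_add_single_congr_right (hρ : ∀ x y, ρ x y = 1 - ρ y x) (hM2 : M2 ρ)
    (hM3 : M3 ρ) (hM5 : M5 ρ) (hU : RepresentedBySum ρ) (hpq : p ≠ q) (hpq' : p ≠ q')
    (hab : 0 ≤ a + b) :
    ρ (Pi.single p a + Pi.single q b) 0 = ρ (Pi.single p a + Pi.single q' b) 0 := by
  rw [add_comm, rho_single_add_single_congr_left hρ hM2 hM3 hM5 hU hpq.symm hpq'.symm
    (by rwa [add_comm]), add_comm]

theorem rho_single_add_single_eq (hn : 2 < n) (hρ : ∀ x y, ρ x y = 1 - ρ y x) (hM2 : M2 ρ)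
    (hM3 : M3 ρ) (hM5 : M5 ρ) (hU : RepresentedBySum ρ) (hpq : p ≠ q) (hpq' : p' ≠ q')
    (hab : 0 ≤ a + b) :
    ρ (Pi.single p a + Pi.single q b) 0 = ρ (Pi.single p' a + Pi.single q' b) 0 := by
  obtain ⟨c, -, hc⟩ := Finset.exists_mem_notMem_of_card_lt_card (s := {p, p'}) (t := Finset.univ)
    (by simpa using Finset.card_le_two.trans_lt hn)
  simp only [Finset.mem_insert, Finset.mem_singleton, not_or] at hc
  calc ρ (Pi.single p a + Pi.single q b) 0 = ρ (Pi.single p a + Pi.single c b) 0 :=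
        rho_single_add_single_congr_right hρ hM2 hM3 hM5 hU hpq (Ne.symm hc.1) hab
    _ = ρ (Pi.single p' a + Pi.single c b) 0 :=
        rho_single_add_single_congr_left hρ hM2 hM3 hM5 hU (Ne.symm hc.1) (Ne.symm hc.2) hab
    _ = ρ (Pi.single p' a + Pi.single q' b) 0 :=
        rho_single_add_single_congr_right hρ hM2 hM3 hM5 hU (Ne.symm hc.2) hpq' hab

end relocation

theorem rho_eq_rho_single_dPos_add_single_dNeg (hn : 2 < n) {ρ : (Fin n → ℝ) → (Fin n → ℝ) → ℝ}
    (hρ : ∀ x y, ρ x y = 1 - ρ y x) (hM2 : M2 ρ) (hM3 : M3 ρ) (hM5 : M5 ρ)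
    (hU : RepresentedBySum ρ) {p q : Fin n} (hpq : p ≠ q) (r : Fin n → ℝ) (hs : 0 ≤ ∑ k, r k) :
    ρ r 0 = ρ (Pi.single p (dPos r) + Pi.single q (-dNeg r)) 0 := by
  induction hN : #{k | r k ≠ 0} using Nat.strong_induction_on generalizing r with
  | _ N ih =>
  by_cases hpair : ∃ i j, i ≠ j ∧ 0 < r i * r j
  · obtain ⟨i, j, hij, hsame⟩ := hpair
    have hi : r i ≠ 0 := left_ne_zero_of_mul hsame.ne'
    have hj : r j ≠ 0 := right_ne_zero_of_mul hsame.ne'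
    rw [← rho_transfer_eq_of_mul_pos hρ hM2 hM3 hM5 hU hij hsame hs,
      ih _ (hN ▸ card_support_transfer_lt hij hi hj) _ (by rwa [sum_transfer hij]) rfl,
      dPos_transfer hij hsame, dNeg_transfer hij hsame]
  · push Not at hpair
    obtain ⟨p', q', hp'q', hp', hq', hr⟩ := exists_eq_single_add_single (by omega) hs hpair
    rw [hr, dPos_single_add_single hp'q' hp' hq', dNeg_single_add_single hp'q' hp' hq', neg_neg]
    refine rho_single_add_single_eq hn hρ hM2 hM3 hM5 hU hp'q' hpq ?_
    rwa [hr, sum_single_add_single hp'q'] at hs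

theorem stmt_2_general {n : ℕ} (hn : 2 < n) (ρ : (Fin n → ℝ) → (Fin n → ℝ) → ℝ)
    (hρ : IsBCR ρ)
    (hM2 : M2 ρ) (hM3 : M3 ρ) (hM5 : M5 ρ)
    (hU : ∀ x y : Fin n → ℝ, x ≠ y → (1/2 ≤ ρ x y ↔ ∑ k, y k ≤ ∑ k, x k)) :
    ∀ z : Fin n → ℝ, z ≠ 0 → 0 ≤ ∑ k, z k →
      ρ z 0 = ρ (fun k => if (k : ℕ) = 0 then (∑ j, if 0 ≤ z j then z j else 0)
        else if (k : ℕ) = 1 then -(∑ j, if z j < 0 then -z j else 0) else 0) 0 := by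
  intro z _ hs
  rw [rho_eq_rho_single_dPos_add_single_dNeg hn hρ.2 hM2 hM3 hM5 hU
    (p := ⟨0, by omega⟩) (q := ⟨1, by omega⟩) (by simp) z hs]
  congr 1
  ext k
  simp only [Pi.add_apply, Pi.single_apply, Fin.ext_iff, dPos, dNeg]
  split_ifs <;> simp_all

/-- Claim 1 in the proof of Theorem 1 — under M1–M5, non-null attributes,
and the representation of the stochastic order by U(x) = Σ_k x_k, for any z ≠ 0 with
Σ_k z_k ≥ 0 one has ρ(z,0) = ρ(d⁺(z)e₁ − d⁻(z)e₂, 0). -/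
theorem stmt_2 {n : ℕ} (hn : 2 < n) (ρ : (Fin n → ℝ) → (Fin n → ℝ) → ℝ)
    (hρ : IsBCR ρ)
    (hM1 : M1 ρ) (hM2 : M2 ρ) (hM3 : M3 ρ) (hM4 : M4 ρ) (hM5 : M5 ρ)
    (hnonnull : ∀ k, ¬ NullAttr ρ k)
    (hU : ∀ x y : Fin n → ℝ, x ≠ y → (1/2 ≤ ρ x y ↔ ∑ k, y k ≤ ∑ k, x k)) :
    ∀ z : Fin n → ℝ, z ≠ 0 → 0 ≤ ∑ k, z k →
      ρ z 0 = ρ (fun k => if (k : ℕ) = 0 then (∑ j, if 0 ≤ z j then z j else 0)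
        else if (k : ℕ) = 1 then -(∑ j, if z j < 0 then -z j else 0) else 0) 0 :=
  stmt_2_general hn ρ hρ hM2 hM3 hM5 hU
end

section
/- Let n > 2 and let ρ be a binary choice rule on ℝⁿ in which every attribute is non-null. Then ρ has an L1-complexity representation (G, β) if and only if ρ satisfies M1–M5. Moreover, if ρ also has an L1-complexity representation (G', β'), then G' = G and β' = Cβ for some C > 0. -/
open Finset

set_option maxHeartbeats 1000000

variable {n : ℕ}

/-! ### Auxiliary development -/

section Aux

/-- numerator -/
noncomputable def aNum {n : ℕ} (β x y : Fin n → ℝ) : ℝ :=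
  ∑ k, β k * x k - ∑ k, β k * y k

/-- denominator -/
noncomputable def aDen {n : ℕ} (β x y : Fin n → ℝ) : ℝ :=
  ∑ k, |β k * (x k - y k)|

lemma aNum_eq {n : ℕ} (β x y : Fin n → ℝ) :
    aNum β x y = ∑ k, β k * (x k - y k) := by
  simp [aNum, mul_sub, Finset.sum_sub_distrib]

lemma aDen_pos {n : ℕ} {β x y : Fin n → ℝ} (hβ : ∀ k, β k ≠ 0) (hxy : x ≠ y) :
    0 < aDen β x y := by
  obtain ⟨k, hk⟩ : ∃ k, x k ≠ y k := by
    by_contra h; push_neg at h; exact hxy (funext h)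
  refine Finset.sum_pos' (fun i _ => abs_nonneg _) ⟨k, Finset.mem_univ k, ?_⟩
  exact abs_pos.mpr (mul_ne_zero (hβ k) (sub_ne_zero.mpr hk))

lemma abs_aNum_le_aDen {n : ℕ} (β x y : Fin n → ℝ) :
    |aNum β x y| ≤ aDen β x y := by
  rw [aNum_eq]; exact Finset.abs_sum_le_sum_abs _ _

lemma ratio_mem_Icc {n : ℕ} {β x y : Fin n → ℝ} (hβ : ∀ k, β k ≠ 0) (hxy : x ≠ y) :
    aNum β x y / aDen β x y ∈ Set.Icc (-1 : ℝ) 1 := by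
  have hd := aDen_pos hβ hxy
  have h := abs_aNum_le_aDen β x y
  rw [abs_le] at h
  constructor
  · rw [le_div_iff₀ hd]; linarith [h.1]
  · rw [div_le_one hd]; linarith [h.2]

lemma bcr_self {X : Type*} {ρ : X → X → ℝ} (hρ : IsBCR ρ) (x : X) : ρ x x = 1/2 := by
  have := hρ.2 x x; linarith

section RepFacts
variable {n : ℕ} {ρ : (Fin n → ℝ) → (Fin n → ℝ) → ℝ} {G : ℝ → ℝ} {β : Fin n → ℝ}

lemma rep_G0 (h : IsL1Rep ρ G β) : G 0 = 1/2 := by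
  have := (h.2.2.2.1 0 (by norm_num)).2
  rw [neg_zero] at this; linarith

lemma rep_eval (h : IsL1Rep ρ G β) {x y : Fin n → ℝ} (hxy : x ≠ y) :
    ρ x y = G (aNum β x y / aDen β x y) :=
  h.2.2.2.2 x y hxy

lemma rep_G_le_iff (h : IsL1Rep ρ G β) {r s : ℝ} (hr : r ∈ Set.Icc (-1:ℝ) 1)
    (hs : s ∈ Set.Icc (-1:ℝ) 1) : G r ≤ G s ↔ r ≤ s :=
  h.2.2.1.le_iff_le hr hs

lemma rep_half_le_iff (h : IsL1Rep ρ G β) {x y : Fin n → ℝ} (hxy : x ≠ y) :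
    1/2 ≤ ρ x y ↔ 0 ≤ aNum β x y := by
  have hd := aDen_pos h.1 hxy
  rw [rep_eval h hxy, ← rep_G0 h,
    rep_G_le_iff h (by norm_num) (ratio_mem_Icc h.1 hxy), le_div_iff₀ hd, zero_mul]

lemma rep_half_lt_iff (hρ : IsBCR ρ) (h : IsL1Rep ρ G β) {x y : Fin n → ℝ}
    (hxy : x ≠ y) : 1/2 < ρ x y ↔ 0 < aNum β x y := by
  have h1 := rep_half_le_iff h (Ne.symm hxy)
  have hnum : aNum β y x = - aNum β x y := by simp only [aNum]; ring
  have hsym := hρ.2 y x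
  rw [hnum] at h1
  constructor
  · intro hlt
    by_contra hc; push_neg at hc
    have := h1.mpr (by linarith)
    linarith
  · intro hpos
    by_contra hc; push_neg at hc
    have := h1.mp (by linarith)
    linarith

lemma rep_M2 (hρ : IsBCR ρ) (h : IsL1Rep ρ G β) : M2 ρ := by
  intro x y z α hα0 hα1
  by_cases hxy : x = y
  · subst hxy; rw [bcr_self hρ, bcr_self hρ]
  have hne : α • x + (1 - α) • z ≠ α • y + (1 - α) • z := by
    intro hc
    apply hxy
    funext k
    have := congrFun hc k
    simp only [Pi.add_apply, Pi.smul_apply, smul_eq_mul] at this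
    nlinarith [this]
  rw [rep_eval h hxy, rep_eval h hne]
  congr 1
  have hnum : aNum β (α • x + (1 - α) • z) (α • y + (1 - α) • z) = α * aNum β x y := by
    rw [aNum_eq, aNum_eq, Finset.mul_sum]
    refine Finset.sum_congr rfl fun k _ => ?_
    simp only [Pi.add_apply, Pi.smul_apply, smul_eq_mul]
    ring
  have hden : aDen β (α • x + (1 - α) • z) (α • y + (1 - α) • z) = α * aDen β x y := by
    simp only [aDen, Finset.mul_sum]
    refine Finset.sum_congr rfl fun k _ => ?_
    have : β k * ((α • x + (1 - α) • z) k - (α • y + (1 - α) • z) k)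
        = α * (β k * (x k - y k)) := by
      simp only [Pi.add_apply, Pi.smul_apply, smul_eq_mul]; ring
    rw [this, abs_mul, abs_of_pos hα0]
  rw [hnum, hden, mul_div_mul_left _ _ (ne_of_gt hα0)]

lemma rep_M1 (h : IsL1Rep ρ G β) : M1 ρ := by
  have hcont : ContinuousOn
      (fun p : (Fin n → ℝ) × (Fin n → ℝ) => aNum β p.1 p.2 / aDen β p.1 p.2)
      {p | p.1 ≠ p.2} := by
    apply ContinuousOn.div
    · apply Continuous.continuousOn
      unfold aNum
      exact (continuous_finset_sum _ fun k _ => (continuous_const.mul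
        ((continuous_apply k).comp continuous_fst))).sub
        (continuous_finset_sum _ fun k _ => (continuous_const.mul
        ((continuous_apply k).comp continuous_snd)))
    · apply Continuous.continuousOn
      unfold aDen
      exact continuous_finset_sum _ fun k _ => (continuous_const.mul
        (((continuous_apply k).comp continuous_fst).sub
          ((continuous_apply k).comp continuous_snd))).abs
    · exact fun p hp => ne_of_gt (aDen_pos h.1 hp)
  have : ContinuousOn
      (fun p : (Fin n → ℝ) × (Fin n → ℝ) => G (aNum β p.1 p.2 / aDen β p.1 p.2))
      {p | p.1 ≠ p.2} := by
    apply ContinuousOn.comp h.2.1 hcont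
    exact fun p hp => ratio_mem_Icc h.1 hp
  exact this.congr fun p hp => rep_eval h hp

lemma aux_mediant_side {a b da db : ℝ} (hda : 0 < da) (hdb : 0 < db)
    (hcross : a * db ≤ b * da) : a/da ≤ (a+b)/(da+db) := by
  rw [div_le_div_iff₀ hda (by linarith)]; nlinarith

lemma aux_mediant_main {a b da db dc : ℝ} (hda : 0 < da) (hdb : 0 < db) (hdc : 0 < dc)
    (htri : dc ≤ da + db) (hab : 0 < a + b) (hcmp : a/da ≤ b/db) :
    a/da < (a+b)/dc ∨ ((a+b)/dc = a/da ∧ (a+b)/dc = b/db) := by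
  have hcross : a * db ≤ b * da := by
    rw [div_le_div_iff₀ hda hdb] at hcmp; linarith
  have h1 : a/da ≤ (a+b)/(da+db) := aux_mediant_side hda hdb hcross
  have h2 : (a+b)/(da+db) ≤ (a+b)/dc :=
    div_le_div_of_nonneg_left (le_of_lt hab) hdc htri
  rcases lt_or_ge (a/da) ((a+b)/dc) with hlt | hle
  · exact Or.inl hlt
  · have heq : (a+b)/dc = a/da := le_antisymm hle (le_trans h1 h2)
    have heq2 : a/da = (a+b)/(da+db) := le_antisymm h1 (le_trans h2 hle)
    have hcross2 : a * db = b * da := by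
      rw [div_eq_div_iff (ne_of_gt hda) (by positivity : da + db ≠ 0)] at heq2; nlinarith
    have : a/da = b/db := by rw [div_eq_div_iff (ne_of_gt hda) (ne_of_gt hdb)]; linarith
    exact Or.inr ⟨heq, by rw [heq, this]⟩

lemma aux_mediant {a b da db dc : ℝ} (ha : 0 ≤ a) (hb : 0 ≤ b) (hda : 0 < da)
    (hdb : 0 < db) (hdc : 0 < dc) (htri : dc ≤ da + db) :
    min (a/da) (b/db) < (a+b)/dc ∨ ((a+b)/dc = a/da ∧ (a+b)/dc = b/db) := by
  rcases eq_or_lt_of_le (add_nonneg ha hb) with hab | hab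
  · have ha0 : a = 0 := by linarith
    have hb0 : b = 0 := by linarith
    right; simp [ha0, hb0]
  · rcases le_total (a/da) (b/db) with hcmp | hcmp
    · rw [min_eq_left hcmp]
      exact aux_mediant_main hda hdb hdc htri hab hcmp
    · rw [min_eq_right hcmp]
      have := aux_mediant_main hdb hda hdc (by linarith) (by rw [add_comm]; exact hab) hcmp
      rw [add_comm b a] at this
      rcases this with h' | ⟨h1, h2⟩
      · exact Or.inl h'
      · exact Or.inr ⟨h2, h1⟩

lemma aDen_tri {x y z : Fin n → ℝ} :
    aDen β x z ≤ aDen β x y + aDen β y z := by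
  rw [aDen, aDen, aDen, ← Finset.sum_add_distrib]
  refine Finset.sum_le_sum fun k _ => ?_
  have : β k * (x k - z k) = β k * (x k - y k) + β k * (y k - z k) := by ring
  rw [this]; exact abs_add_le _ _

lemma rep_M3 (hρ : IsBCR ρ) (h : IsL1Rep ρ G β) : M3 ρ := by
  intro x y z hxy hyz
  by_cases hxy' : x = y
  · subst hxy'
    rw [bcr_self hρ, min_eq_left hyz]
    rcases eq_or_lt_of_le hyz with he | hlt
    · exact Or.inr ⟨he.symm, rfl⟩
    · exact Or.inl hlt
  by_cases hyz' : y = z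
  · subst hyz'
    rw [bcr_self hρ, min_eq_right hxy]
    rcases eq_or_lt_of_le hxy with he | hlt
    · exact Or.inr ⟨rfl, he.symm⟩
    · exact Or.inl hlt
  by_cases hxz' : x = z
  · subst hxz'
    have h1 : ρ y x = 1 - ρ x y := by rw [hρ.2 y x]
    have h2 : ρ x y = 1/2 := by rw [h1] at hyz; linarith
    rw [bcr_self hρ]
    exact Or.inr ⟨h2.symm, by rw [h1, h2]; norm_num⟩
  have ha := (rep_half_le_iff h hxy').mp hxy
  have hb := (rep_half_le_iff h hyz').mp hyz
  have hadd : aNum β x z = aNum β x y + aNum β y z := by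
    simp only [aNum]; ring
  have hda := aDen_pos h.1 hxy'
  have hdb := aDen_pos h.1 hyz'
  have hdc := aDen_pos h.1 hxz'
  have hmem_a := ratio_mem_Icc h.1 hxy'
  have hmem_b := ratio_mem_Icc h.1 hyz'
  have hmem_c := ratio_mem_Icc h.1 hxz'
  rw [rep_eval h hxy', rep_eval h hyz', rep_eval h hxz', hadd]
  rcases aux_mediant ha hb hda hdb hdc (aDen_tri) with hlt | ⟨h1, h2⟩
  · left
    rcases le_total (aNum β x y / aDen β x y) (aNum β y z / aDen β y z) with hc | hc
    · rw [min_eq_left hc] at hlt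
      have hG := h.2.2.1 hmem_a (by rw [hadd] at hmem_c; exact hmem_c) hlt
      calc min (G (aNum β x y / aDen β x y)) (G (aNum β y z / aDen β y z))
          ≤ G (aNum β x y / aDen β x y) := min_le_left _ _
        _ < _ := hG
    · rw [min_eq_right hc] at hlt
      have hG := h.2.2.1 hmem_b (by rw [hadd] at hmem_c; exact hmem_c) hlt
      calc min (G (aNum β x y / aDen β x y)) (G (aNum β y z / aDen β y z))
          ≤ G (aNum β y z / aDen β y z) := min_le_right _ _
        _ < _ := hG
  · exact Or.inr ⟨congrArg G h1, congrArg G h2⟩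

lemma aNum_update (β y : Fin n → ℝ) (k : Fin n) (t : ℝ) :
    aNum β (Function.update y k t) y = β k * (t - y k) := by
  rw [aNum_eq, Finset.sum_eq_single k]
  · rw [Function.update_self]
  · intro i _ hik; rw [Function.update_of_ne hik]; simp
  · intro hk; exact absurd (Finset.mem_univ k) hk

lemma aDen_update (β y : Fin n → ℝ) (k : Fin n) (t : ℝ) :
    aDen β (Function.update y k t) y = |β k * (t - y k)| := by
  rw [aDen, Finset.sum_eq_single k]
  · rw [Function.update_self]
  · intro i _ hik; rw [Function.update_of_ne hik]; simp
  · intro hk; exact absurd (Finset.mem_univ k) hk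

lemma rep_single_half_le (hρ : IsBCR ρ) (h : IsL1Rep ρ G β) (y : Fin n → ℝ)
    (k : Fin n) (t : ℝ) :
    (1/2 ≤ ρ (Function.update y k t) y ↔ 0 ≤ β k * (t - y k)) ∧
    (1/2 < ρ (Function.update y k t) y ↔ 0 < β k * (t - y k)) := by
  by_cases ht : t = y k
  · subst ht
    rw [Function.update_eq_self, bcr_self hρ]
    simp
  · have hne : Function.update y k t ≠ y := by
      intro hc
      exact ht (by rw [← Function.update_self k t y]; exact congrFun hc k)
    rw [rep_half_le_iff h hne, rep_half_lt_iff hρ h hne, aNum_update]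
    exact ⟨Iff.rfl, Iff.rfl⟩

lemma rep_DomD_iff (hρ : IsBCR ρ) (h : IsL1Rep ρ G β) (x y : Fin n → ℝ) :
    DomD ρ x y ↔ (∀ k, 0 ≤ β k * (x k - y k)) ∧ ∃ k, 0 < β k * (x k - y k) := by
  unfold DomD
  exact and_congr
    (forall_congr' fun k => (rep_single_half_le hρ h y k (x k)).1)
    (exists_congr fun k => (rep_single_half_le hρ h y k (x k)).2)

lemma rep_M4 (hρ : IsBCR ρ) (h : IsL1Rep ρ G β) : M4 ρ := by
  have mem1 : (1:ℝ) ∈ Set.Icc (-1:ℝ) 1 := by norm_num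
  have mem0 : (0:ℝ) ∈ Set.Icc (-1:ℝ) 1 := by norm_num
  have hG01 : G 0 < G 1 := h.2.2.1 mem0 mem1 (by norm_num)
  intro x y hdom w z
  rw [rep_DomD_iff hρ h] at hdom
  obtain ⟨hall, k0, hk0⟩ := hdom
  have hxy : x ≠ y := by
    intro hc; subst hc; simp at hk0
  have hnum_eq_den : aNum β x y = aDen β x y := by
    rw [aNum_eq, aDen]
    exact Finset.sum_congr rfl fun k _ => (abs_of_nonneg (hall k)).symm
  have hρxy : ρ x y = G 1 := by
    rw [rep_eval h hxy, hnum_eq_den, div_self (ne_of_gt (aDen_pos h.1 hxy))]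
  by_cases hwz : w = z
  · subst hwz
    rw [bcr_self hρ, hρxy, ← rep_G0 h]
    exact ⟨le_of_lt hG01, fun _ => hG01⟩
  · have hmem := ratio_mem_Icc h.1 hwz
    have hd := aDen_pos h.1 hwz
    refine ⟨?_, ?_⟩
    · rw [rep_eval h hwz, hρxy]
      exact (rep_G_le_iff h hmem mem1).mpr hmem.2
    · intro hndom
      rw [rep_DomD_iff hρ h] at hndom
      have hrlt : aNum β w z / aDen β w z < 1 := by
        rcases not_and_or.mp hndom with hna | hnb
        · push_neg at hna
          obtain ⟨k, hk⟩ := hna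
          have hlt : aNum β w z < aDen β w z := by
            rw [aNum_eq, aDen]
            refine Finset.sum_lt_sum (fun i _ => le_abs_self _)
              ⟨k, Finset.mem_univ k, ?_⟩
            rw [abs_of_neg hk]; linarith
          exact (div_lt_one hd).mpr hlt
        · push_neg at hnb
          have hle : aNum β w z ≤ 0 := by
            rw [aNum_eq]
            exact Finset.sum_nonpos fun i _ => hnb i
          calc aNum β w z / aDen β w z ≤ 0 := div_nonpos_of_nonpos_of_nonneg hle (le_of_lt hd)
            _ < 1 := by norm_num
      rw [rep_eval h hwz, hρxy]
      exact h.2.2.1 hmem mem1 hrlt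

lemma rep_M5 (hρ : IsBCR ρ) (h : IsL1Rep ρ G β) : M5 ρ := by
  have mem0 : (0:ℝ) ∈ Set.Icc (-1:ℝ) 1 := by norm_num
  intro x y x' hxy hcond hhalf
  by_cases hx'x : x' = x
  · subst hx'x; exact le_refl _
  obtain ⟨i, hx'i, hdiff⟩ := hcond
  have hnum0 : aNum β x' x = 0 := by
    have hr0 : aNum β x' x / aDen β x' x = 0 :=
      h.2.2.1.injOn (ratio_mem_Icc h.1 hx'x) mem0
        (by rw [← rep_eval h hx'x, hhalf, rep_G0 h])
    rcases div_eq_zero_iff.mp hr0 with h0 | h0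
    · exact h0
    · exact absurd h0 (ne_of_gt (aDen_pos h.1 hx'x))
  have hD : ∃ j, j ≠ i ∧ ∀ k, k ≠ i → k ≠ j → x' k = x k := by
    by_cases hex : ∃ j, j ≠ i ∧ x' j ≠ x j
    · obtain ⟨j, hji, hj⟩ := hex
      exact ⟨j, hji, fun k hki hkj => by
        by_contra hne
        exact hkj (hdiff k j hki hji hne hj)⟩
    · push_neg at hex
      exfalso
      have hxi : x' i ≠ x i := by
        intro he
        apply hx'x
        funext k
        by_cases hk : k = i
        · subst hk; exact he
        · exact hex k hk
      have hone : aNum β x' x = β i * (x' i - x i) := by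
        rw [aNum_eq, Finset.sum_eq_single i]
        · intro b _ hbi; rw [hex b hbi]; simp
        · intro hi; exact absurd (Finset.mem_univ i) hi
      rw [hone] at hnum0
      rcases mul_eq_zero.mp hnum0 with h0 | h0
      · exact h.1 i h0
      · exact hxi (by linarith [sub_eq_zero.mp h0])
  obtain ⟨j, hji, hoff⟩ := hD
  have hij : i ≠ j := Ne.symm hji
  have hsplit : ∀ (g : Fin n → ℝ),
      ∑ k, g k = ∑ k ∈ Finset.univ \ ({i, j} : Finset (Fin n)), g k + (g i + g j) := by
    intro g
    rw [← Finset.sum_pair hij, Finset.sum_sdiff (Finset.subset_univ _)]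
  have hkey : β j * (x' j - x j) = β i * (x i - y i) := by
    have hsum : aNum β x' x =
        ∑ k ∈ Finset.univ \ ({i, j} : Finset (Fin n)), β k * (x' k - x k)
          + (β i * (x' i - x i) + β j * (x' j - x j)) := by
      rw [aNum_eq]; exact hsplit _
    have hzero : ∑ k ∈ Finset.univ \ ({i, j} : Finset (Fin n)), β k * (x' k - x k) = 0 := by
      refine Finset.sum_eq_zero fun k hk => ?_
      have hk' := Finset.mem_sdiff.mp hk
      have : k ≠ i ∧ k ≠ j := by
        constructor <;> intro hc <;> exact hk'.2 (by simp [hc])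
      rw [hoff k this.1 this.2]; simp
    rw [hsum, hzero, hx'i] at hnum0
    linarith
  have hden_le : aDen β x' y ≤ aDen β x y := by
    rw [aDen, aDen, hsplit, hsplit]
    have h1 : |β i * (x' i - y i)| = 0 := by rw [hx'i]; simp
    have h2 : |β j * (x' j - y j)| ≤ |β j * (x j - y j)| + |β i * (x i - y i)| := by
      rw [show β j * (x' j - y j) = β j * (x j - y j) + β j * (x' j - x j) by ring,
        hkey]
      exact abs_add_le _ _
    have h3 : ∑ k ∈ Finset.univ \ ({i, j} : Finset (Fin n)), |β k * (x' k - y k)|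
        = ∑ k ∈ Finset.univ \ ({i, j} : Finset (Fin n)), |β k * (x k - y k)| := by
      refine Finset.sum_congr rfl fun k hk => ?_
      have hk' := Finset.mem_sdiff.mp hk
      have : k ≠ i ∧ k ≠ j := by
        constructor <;> intro hc <;> exact hk'.2 (by simp [hc])
      rw [hoff k this.1 this.2]
    rw [h3]
    linarith [abs_nonneg (β i * (x i - y i))]
  have hnum_eq : aNum β x' y = aNum β x y := by
    have : aNum β x' y = aNum β x' x + aNum β x y := by simp only [aNum]; ring
    rw [this, hnum0, zero_add]
  by_cases hxy' : x = y
  · subst hxy'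
    rw [bcr_self hρ, rep_eval h hx'x, hnum0, zero_div, rep_G0 h]
  · have hnum_nonneg : 0 ≤ aNum β x y := (rep_half_le_iff h hxy').mp hxy
    by_cases hx'y : x' = y
    · have h0 : aNum β x y = 0 := by
        rw [← hnum_eq, hx'y]; simp [aNum]
      rw [rep_eval h hxy', h0, zero_div, rep_G0 h, hx'y, bcr_self hρ]
    · have hd' := aDen_pos h.1 hx'y
      have hmem' := ratio_mem_Icc h.1 hx'y
      rw [hnum_eq] at hmem'
      rw [rep_eval h hxy', rep_eval h hx'y, hnum_eq]
      exact (rep_G_le_iff h (ratio_mem_Icc h.1 hxy') hmem').mpr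
        (div_le_div_of_nonneg_left hnum_nonneg hd' hden_le)

lemma rep_half_eq_iff (h : IsL1Rep ρ G β) {x y : Fin n → ℝ} (hxy : x ≠ y) :
    ρ x y = 1/2 ↔ aNum β x y = 0 := by
  constructor
  · intro hhalf
    have hr0 : aNum β x y / aDen β x y = 0 :=
      h.2.2.1.injOn (ratio_mem_Icc h.1 hxy) (by norm_num : (0:ℝ) ∈ Set.Icc (-1:ℝ) 1)
        (by rw [← rep_eval h hxy, hhalf, rep_G0 h])
    rcases div_eq_zero_iff.mp hr0 with h0 | h0
    · exact h0
    · exact absurd h0 (ne_of_gt (aDen_pos h.1 hxy))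
  · intro h0
    rw [rep_eval h hxy, h0, zero_div, rep_G0 h]

end RepFacts

lemma sum_two_fun {n : ℕ} {i j : Fin n} (hij : i ≠ j) (f : Fin n → ℝ)
    (hf : ∀ k, k ≠ i → k ≠ j → f k = 0) : ∑ k, f k = f i + f j := by
  rw [← Finset.sum_pair hij]
  exact (Finset.sum_subset (Finset.subset_univ _) (fun k _ hk =>
    hf k (fun h => hk (by simp [h])) (fun h => hk (by simp [h])))).symm

lemma aNum_zero_right {n : ℕ} (β v : Fin n → ℝ) : aNum β v 0 = ∑ m, β m * v m := by
  simp [aNum]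

lemma aDen_zero_right {n : ℕ} (β v : Fin n → ℝ) : aDen β v 0 = ∑ m, |β m * v m| := by
  simp [aDen]

lemma rep_unique {n : ℕ} (hn : 2 < n) {ρ : (Fin n → ℝ) → (Fin n → ℝ) → ℝ}
    (hρ : IsBCR ρ) {G : ℝ → ℝ} {β : Fin n → ℝ} {G' : ℝ → ℝ} {β' : Fin n → ℝ}
    (h : IsL1Rep ρ G β) (h' : IsL1Rep ρ G' β') :
    Set.EqOn G' G (Set.Icc (-1) 1) ∧ ∃ C : ℝ, 0 < C ∧ β' = C • β := by
  have hnR : (0:ℝ) < n := by positivity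
  set i0 : Fin n := ⟨0, by omega⟩ with hi0def
  set i1 : Fin n := ⟨1, by omega⟩ with hi1def
  have hi01 : i0 ≠ i1 := by simp [hi0def, hi1def, Fin.ext_iff]
  have hker : ∀ v : Fin n → ℝ, v ≠ 0 →
      ((∑ m, β m * v m) = 0 ↔ (∑ m, β' m * v m) = 0) := by
    intro v hv
    rw [← aNum_zero_right, ← aNum_zero_right, ← rep_half_eq_iff h hv,
      ← rep_half_eq_iff h' hv]
  set C := β' i0 / β i0 with hC
  have hprop : ∀ k, β' k = C * β k := by
    intro k
    by_cases hk : k = i0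
    · subst hk; rw [hC, div_mul_cancel₀ _ (h.1 i0)]
    · set v : Fin n → ℝ :=
        fun m => if m = i0 then β k else if m = k then -(β i0) else 0 with hvdef
      have hvi0 : v i0 = β k := by simp [hvdef]
      have hvk : v k = -(β i0) := by simp [hvdef, hk]
      have hvo : ∀ m, m ≠ i0 → m ≠ k → v m = 0 := by
        intro m h1 h2; simp [hvdef, h1, h2]
      have hvne : v ≠ 0 := by
        intro hc
        exact h.1 k (by rw [← hvi0, hc]; rfl)
      have hsum : (∑ m, β m * v m) = 0 := by
        rw [sum_two_fun (Ne.symm hk) _ (fun m h1 h2 => by rw [hvo m h1 h2]; simp),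
          hvi0, hvk]
        ring
      have hsum' := (hker v hvne).mp hsum
      rw [sum_two_fun (Ne.symm hk) _ (fun m h1 h2 => by rw [hvo m h1 h2]; simp),
        hvi0, hvk] at hsum'
      have hβi0 := h.1 i0
      rw [hC]
      field_simp
      nlinarith [hsum']
  have hCne : C ≠ 0 := by
    intro hc
    exact h'.1 i0 (by rw [hprop i0, hc, zero_mul])
  have hCpos : 0 < C := by
    rcases hCne.lt_or_gt with hneg | hpos
    · exfalso
      set v : Fin n → ℝ := fun m => (β m)⁻¹ with hvdef
      have hvne : v ≠ 0 := by
        intro hc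
        have : v i0 = 0 := by rw [hc]; rfl
        exact h.1 i0 (inv_eq_zero.mp this)
      have hnum : aNum β v 0 = n := by
        rw [aNum_zero_right,
          Finset.sum_congr rfl fun m _ => mul_inv_cancel₀ (h.1 m)]
        simp
      have hden : aDen β v 0 = n := by
        rw [aDen_zero_right,
          Finset.sum_congr rfl fun m _ =>
            (by rw [mul_inv_cancel₀ (h.1 m)]; norm_num :
              |β m * v m| = (1:ℝ))]
        simp
      have hnum' : aNum β' v 0 = n * C := by
        rw [aNum_zero_right,
          Finset.sum_congr rfl fun m _ =>
            (by rw [hprop m, mul_assoc, mul_inv_cancel₀ (h.1 m), mul_one] :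
              β' m * v m = C)]
        simp [mul_comm]
      have hden' : aDen β' v 0 = n * (-C) := by
        rw [aDen_zero_right,
          Finset.sum_congr rfl fun m _ =>
            (by rw [hprop m, mul_assoc, mul_inv_cancel₀ (h.1 m), mul_one,
                abs_of_neg hneg] : |β' m * v m| = -C)]
        simp [mul_comm]
      have hρ1 : ρ v 0 = G 1 := by
        rw [rep_eval h hvne, hnum, hden, div_self (ne_of_gt hnR)]
      have hρ2 : ρ v 0 = G' (-1) := by
        rw [rep_eval h' hvne, hnum', hden',
          show (n:ℝ) * C / ((n:ℝ) * (-C)) = -1 by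
            rw [div_eq_iff (by simp [hCne, ne_of_gt hnR] : (n:ℝ) * (-C) ≠ 0)]; ring]
      have hG1 : G 0 < G 1 := h.2.2.1 (by norm_num) (by norm_num) (by norm_num)
      have hG2 : G' (-1) < G' 0 := h'.2.2.1 (by norm_num) (by norm_num) (by norm_num)
      rw [rep_G0 h] at hG1
      rw [rep_G0 h'] at hG2
      rw [hρ1] at hρ2
      linarith
    · exact hpos
  refine ⟨?_, C, hCpos, funext fun k => by rw [hprop k]; rfl⟩
  intro r hr
  obtain ⟨hr1, hr2⟩ := hr
  set u : Fin n → ℝ :=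
    fun m => if m = i0 then (1+r)/2 else if m = i1 then -((1-r)/2) else 0 with hudef
  have hui0 : u i0 = (1+r)/2 := by simp [hudef]
  have hui1 : u i1 = -((1-r)/2) := by simp [hudef, Ne.symm hi01]
  have huo : ∀ m, m ≠ i0 → m ≠ i1 → u m = 0 := by
    intro m h1 h2; simp [hudef, h1, h2]
  set v : Fin n → ℝ := fun m => u m / β m with hvdef
  have hbv : ∀ m, β m * v m = u m := fun m => by
    rw [hvdef, mul_comm, div_mul_cancel₀ _ (h.1 m)]
  have hbv' : ∀ m, β' m * v m = C * u m := fun m => by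
    rw [hvdef, hprop m, mul_assoc, mul_comm (β m), div_mul_cancel₀ _ (h.1 m)]
  have hvne : v ≠ 0 := by
    intro hc
    by_cases hre : r = -1
    · have : v i1 = 0 := by rw [hc]; rfl
      rw [hvdef] at this
      have : u i1 = 0 := by
        by_contra hcc
        exact hcc (by
          have := div_eq_zero_iff.mp this
          rcases this with h0 | h0
          · exact h0
          · exact absurd h0 (h.1 i1))
      rw [hui1, hre] at this
      norm_num at this
    · have : v i0 = 0 := by rw [hc]; rfl
      rw [hvdef] at this
      have hu0 : u i0 = 0 := by
        rcases div_eq_zero_iff.mp this with h0 | h0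
        · exact h0
        · exact absurd h0 (h.1 i0)
      rw [hui0] at hu0
      apply hre
      linarith
  have habs0 : |u i0| = (1+r)/2 := by rw [hui0]; exact abs_of_nonneg (by linarith)
  have habs1 : |u i1| = (1-r)/2 := by
    rw [hui1, abs_neg]; exact abs_of_nonneg (by linarith)
  have hnum : aNum β v 0 = r := by
    rw [aNum_zero_right, Finset.sum_congr rfl fun m _ => hbv m,
      sum_two_fun hi01 u (fun m h1 h2 => huo m h1 h2), hui0, hui1]
    ring
  have hden : aDen β v 0 = 1 := by
    rw [aDen_zero_right, Finset.sum_congr rfl fun m _ => congrArg abs (hbv m),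
      sum_two_fun hi01 _ (fun m h1 h2 => by rw [huo m h1 h2]; simp), habs0, habs1]
    ring
  have hnum' : aNum β' v 0 = C * r := by
    rw [aNum_zero_right, Finset.sum_congr rfl fun m _ => hbv' m, ← Finset.mul_sum,
      sum_two_fun hi01 u (fun m h1 h2 => huo m h1 h2), hui0, hui1]
    ring_nf
  have hden' : aDen β' v 0 = C := by
    rw [aDen_zero_right, Finset.sum_congr rfl fun m _ => congrArg abs (hbv' m),
      Finset.sum_congr rfl fun m _ => abs_mul C (u m), ← Finset.mul_sum,
      sum_two_fun hi01 _ (fun m h1 h2 => by rw [huo m h1 h2]; simp), habs0, habs1,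
      abs_of_pos hCpos]
    ring
  have e1 : ρ v 0 = G r := by rw [rep_eval h hvne, hnum, hden, div_one]
  have e2 : ρ v 0 = G' r := by
    rw [rep_eval h' hvne, hnum', hden', mul_comm C r, mul_div_assoc,
      div_self (ne_of_gt hCpos), mul_one]
  rw [← e1, e2]


end Aux


/-! ### u-space development for the converse direction -/

/-- sum of coordinates -/
noncomputable def Su {n : ℕ} (u : Fin n → ℝ) : ℝ := ∑ k, u k

/-- L1 norm -/
noncomputable def Nu {n : ℕ} (u : Fin n → ℝ) : ℝ := ∑ k, |u k|

lemma Nu_nonneg {n : ℕ} (u : Fin n → ℝ) : 0 ≤ Nu u :=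
  Finset.sum_nonneg fun k _ => abs_nonneg _

lemma Su_le_Nu {n : ℕ} (u : Fin n → ℝ) : Su u ≤ Nu u :=
  Finset.sum_le_sum fun k _ => le_abs_self _

lemma neg_Nu_le_Su {n : ℕ} (u : Fin n → ℝ) : -Nu u ≤ Su u := by
  have := Su_le_Nu (-u)
  have h1 : Su (-u) = -Su u := by simp [Su]
  have h2 : Nu (-u) = Nu u := by simp [Nu]
  linarith

lemma Nu_pos {n : ℕ} {u : Fin n → ℝ} (hu : u ≠ 0) : 0 < Nu u := by
  rcases (Finset.sum_nonneg (fun k (_ : k ∈ Finset.univ) => abs_nonneg (u k))).lt_or_eq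
    with h | h
  · exact h
  · exfalso
    apply hu
    funext k
    have := (Finset.sum_eq_zero_iff_of_nonneg
      (fun k (_ : k ∈ Finset.univ) => abs_nonneg (u k))).mp h.symm k (Finset.mem_univ k)
    exact abs_eq_zero.mp this

lemma Su_neg {n : ℕ} (u : Fin n → ℝ) : Su (-u) = -Su u := by simp [Su]
lemma Nu_neg {n : ℕ} (u : Fin n → ℝ) : Nu (-u) = Nu u := by simp [Nu]

lemma Su_smul {n : ℕ} (t : ℝ) (u : Fin n → ℝ) : Su (t • u) = t * Su u := by
  simp [Su, Finset.mul_sum]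

lemma Nu_smul {n : ℕ} {t : ℝ} (ht : 0 ≤ t) (u : Fin n → ℝ) : Nu (t • u) = t * Nu u := by
  simp only [Nu, Pi.smul_apply, smul_eq_mul, abs_mul, abs_of_nonneg ht, Finset.mul_sum]

lemma Su_add {n : ℕ} (u v : Fin n → ℝ) : Su (u + v) = Su u + Su v := by
  simp [Su, Finset.sum_add_distrib]

/-- merge coordinate i into coordinate j -/
noncomputable def mergeFn {n : ℕ} (i j : Fin n) (u : Fin n → ℝ) : Fin n → ℝ :=
  Function.update (Function.update u j (u i + u j)) i 0

lemma mergeFn_apply_i {n : ℕ} (i j : Fin n) (u : Fin n → ℝ) :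
    mergeFn i j u i = 0 := by
  simp [mergeFn]

lemma mergeFn_apply_j {n : ℕ} {i j : Fin n} (hij : i ≠ j) (u : Fin n → ℝ) :
    mergeFn i j u j = u i + u j := by
  simp [mergeFn, Function.update_of_ne (Ne.symm hij)]

lemma mergeFn_apply_other {n : ℕ} {i j k : Fin n} (hki : k ≠ i) (hkj : k ≠ j)
    (u : Fin n → ℝ) : mergeFn i j u k = u k := by
  simp [mergeFn, Function.update_of_ne hki, Function.update_of_ne hkj]

lemma mergeFn_neg {n : ℕ} (i j : Fin n) (u : Fin n → ℝ) :
    mergeFn i j (-u) = -(mergeFn i j u) := by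
  funext k
  by_cases hki : k = i
  · rw [hki, mergeFn_apply_i, Pi.neg_apply, mergeFn_apply_i, neg_zero]
  by_cases hkj : k = j
  · by_cases hij : i = j
    · rw [hij] at hki
      exact absurd hkj hki
    · rw [hkj]
      simp only [Pi.neg_apply, mergeFn_apply_j hij]
      ring
  · rw [mergeFn_apply_other hki hkj, Pi.neg_apply, Pi.neg_apply,
      mergeFn_apply_other hki hkj]

lemma sum_diff_two {n : ℕ} {i j : Fin n} (hij : i ≠ j) (f g : Fin n → ℝ)
    (hf : ∀ k, k ≠ i → k ≠ j → f k = g k) :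
    (∑ k, f k) - (∑ k, g k) = (f i - g i) + (f j - g j) := by
  rw [← Finset.sum_sub_distrib]
  exact sum_two_fun hij _ (fun k h1 h2 => by rw [hf k h1 h2]; ring)

lemma Su_mergeFn {n : ℕ} {i j : Fin n} (hij : i ≠ j) (u : Fin n → ℝ) :
    Su (mergeFn i j u) = Su u := by
  have := sum_diff_two hij (mergeFn i j u) u
    (fun k h1 h2 => mergeFn_apply_other h1 h2 u)
  rw [mergeFn_apply_i, mergeFn_apply_j hij] at this
  have h0 : Su (mergeFn i j u) - Su u = 0 - u i + (u i + u j - u j) := by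
    simpa [Su] using this
  simp only [Su] at *
  linarith

/-- a two-coordinate vector -/
noncomputable def twoVec {n : ℕ} (i j : Fin n) (P Q : ℝ) : Fin n → ℝ :=
  fun m => if m = i then P else if m = j then -Q else 0

lemma twoVec_apply_i {n : ℕ} (i j : Fin n) (P Q : ℝ) : twoVec i j P Q i = P := by
  simp [twoVec]

lemma twoVec_apply_j {n : ℕ} {i j : Fin n} (hij : i ≠ j) (P Q : ℝ) :
    twoVec i j P Q j = -Q := by
  simp [twoVec, Ne.symm hij]

lemma twoVec_apply_other {n : ℕ} {i j k : Fin n} (hki : k ≠ i) (hkj : k ≠ j)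
    (P Q : ℝ) : twoVec i j P Q k = 0 := by
  simp [twoVec, hki, hkj]

lemma twoVec_ne_zero {n : ℕ} {i j : Fin n} (hij : i ≠ j) {P Q : ℝ} (hP : P ≠ 0 ∨ Q ≠ 0) :
    twoVec i j P Q ≠ 0 := by
  intro hc
  rcases hP with h | h
  · exact h (by rw [← twoVec_apply_i i j P Q, hc]; rfl)
  · have : twoVec i j P Q j = 0 := by rw [hc]; rfl
    rw [twoVec_apply_j hij] at this
    exact h (by linarith)

lemma Su_twoVec {n : ℕ} {i j : Fin n} (hij : i ≠ j) (P Q : ℝ) :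
    Su (twoVec i j P Q) = P - Q := by
  rw [Su, sum_two_fun hij _ (fun k h1 h2 => twoVec_apply_other h1 h2 P Q),
    twoVec_apply_i, twoVec_apply_j hij]
  ring

lemma Nu_twoVec {n : ℕ} {i j : Fin n} (hij : i ≠ j) {P Q : ℝ} (hP : 0 ≤ P) (hQ : 0 ≤ Q) :
    Nu (twoVec i j P Q) = P + Q := by
  rw [Nu, sum_two_fun hij _ (fun k h1 h2 => by rw [twoVec_apply_other h1 h2 P Q]; simp),
    twoVec_apply_i, twoVec_apply_j hij, abs_of_nonneg hP, abs_neg, abs_of_nonneg hQ]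

/-- The bundle of properties satisfied by the normalized choice function
on difference space. -/
structure PhiGood (n : ℕ) (φ : (Fin n → ℝ) → ℝ) : Prop where
  range01 : ∀ u, φ u ∈ Set.Icc (0:ℝ) 1
  scale : ∀ (u : Fin n → ℝ) (t : ℝ), 0 < t → φ (t • u) = φ u
  neg : ∀ u, φ (-u) = 1 - φ u
  cont : ContinuousOn φ {u : Fin n → ℝ | u ≠ 0}
  sign : ∀ u, 1/2 ≤ φ u ↔ 0 ≤ Su u
  m3 : ∀ a b, 1/2 ≤ φ a → 1/2 ≤ φ b →
    (min (φ a) (φ b) < φ (a+b) ∨ (φ (a+b) = φ a ∧ φ (a+b) = φ b))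
  m4 : ∀ u, (∀ k, 0 ≤ u k) → u ≠ 0 → ∀ w,
    φ w ≤ φ u ∧ (¬((∀ k, 0 ≤ w k) ∧ w ≠ 0) → φ w < φ u)
  m5 : ∀ (u : Fin n → ℝ) (i j : Fin n), i ≠ j → 1/2 ≤ φ u → φ u ≤ φ (mergeFn i j u)

namespace PhiGood

variable {n : ℕ} {φ : (Fin n → ℝ) → ℝ}

lemma sign_lt (hg : PhiGood n φ) : ∀ u, 1/2 < φ u ↔ 0 < Su u := by
  intro u
  have h1 := hg.sign (-u)
  rw [hg.neg u, Su_neg] at h1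
  constructor
  · intro h
    by_contra hc
    push_neg at hc
    have := h1.mpr (by linarith)
    linarith
  · intro h
    by_contra hc
    push_neg at hc
    have := h1.mp (by linarith)
    linarith

lemma sign_eq (hg : PhiGood n φ) : ∀ u, φ u = 1/2 ↔ Su u = 0 := by
  intro u
  constructor
  · intro h
    have h1 := (hg.sign u).mp (le_of_eq h.symm)
    have h2 : ¬ (1/2 < φ u) := by rw [h]; exact lt_irrefl _
    rw [hg.sign_lt u] at h2
    linarith
  · intro h
    have h1 := (hg.sign u).mpr (le_of_eq h.symm)
    have h2 : ¬ (0 < Su u) := by rw [h]; exact lt_irrefl _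
    rw [← hg.sign_lt u] at h2
    linarith

lemma move_eq (hg : PhiGood n φ) {i k : Fin n} (hik : i ≠ k) {u : Fin n → ℝ}
    (huk : u k = 0) : φ (mergeFn i k u) = φ u := by
  have key : ∀ v : Fin n → ℝ, v k = 0 → 1/2 ≤ φ v → φ (mergeFn i k v) = φ v := by
    intro v hvk hv
    have h1 := hg.m5 v i k hik hv
    have hS : Su (mergeFn i k v) = Su v := Su_mergeFn hik v
    have hv2 : 1/2 ≤ φ (mergeFn i k v) := by
      rw [hg.sign, hS]
      exact (hg.sign v).mp hv
    have h2 := hg.m5 (mergeFn i k v) k i (Ne.symm hik) hv2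
    have hback : mergeFn k i (mergeFn i k v) = v := by
      funext m
      by_cases hmk : m = k
      · rw [hmk, mergeFn_apply_i, hvk]
      by_cases hmi : m = i
      · rw [hmi, mergeFn_apply_j (Ne.symm hik), mergeFn_apply_j hik,
          mergeFn_apply_i, hvk]
        ring
      · rw [mergeFn_apply_other hmk hmi, mergeFn_apply_other hmi hmk]
    rw [hback] at h2
    linarith
  by_cases h : 1/2 ≤ φ u
  · exact key u huk h
  · have hneg : 1/2 ≤ φ (-u) := by
      rw [hg.neg]; linarith [(hg.range01 u).1, h]
    have := key (-u) (by rw [Pi.neg_apply, huk, neg_zero]) hneg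
    rw [mergeFn_neg, hg.neg, hg.neg] at this
    linarith

lemma mergeFn_twoVec_pos {i j m : Fin n} (hij : i ≠ j) (hmi : m ≠ i) (hmj : m ≠ j)
    (P Q : ℝ) : mergeFn i m (twoVec i j P Q) = twoVec m j P Q := by
  funext k
  by_cases hki : k = i
  · rw [hki, mergeFn_apply_i, twoVec_apply_other (Ne.symm hmi) hij]
  by_cases hkm : k = m
  · rw [hkm, mergeFn_apply_j (Ne.symm hmi), twoVec_apply_i, twoVec_apply_i,
      twoVec_apply_other hmi hmj]
    ring
  by_cases hkj : k = j
  · rw [hkj, mergeFn_apply_other (Ne.symm hij) (Ne.symm hmj), twoVec_apply_j hij,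
      twoVec_apply_j hmj]
  · rw [mergeFn_apply_other hki hkm, twoVec_apply_other hki hkj,
      twoVec_apply_other hkm hkj]

lemma mergeFn_twoVec_neg {i j m : Fin n} (hij : i ≠ j) (hmi : m ≠ i) (hmj : m ≠ j)
    (P Q : ℝ) : mergeFn j m (twoVec i j P Q) = twoVec i m P Q := by
  funext k
  by_cases hkj : k = j
  · rw [hkj, mergeFn_apply_i, twoVec_apply_other (Ne.symm hij) (Ne.symm hmj)]
  by_cases hkm : k = m
  · rw [hkm, mergeFn_apply_j (Ne.symm hmj), twoVec_apply_j hij,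
      twoVec_apply_other hmi hmj, twoVec_apply_j (Ne.symm hmi)]
    ring
  by_cases hki : k = i
  · rw [hki, mergeFn_apply_other hij (Ne.symm hmi), twoVec_apply_i, twoVec_apply_i]
  · rw [mergeFn_apply_other hkj hkm, twoVec_apply_other hki hkj,
      twoVec_apply_other hki hkm]

lemma two_move_fst (hg : PhiGood n φ) {i j m : Fin n} (hij : i ≠ j) (hmi : m ≠ i)
    (hmj : m ≠ j) (P Q : ℝ) : φ (twoVec m j P Q) = φ (twoVec i j P Q) := by
  rw [← mergeFn_twoVec_pos hij hmi hmj P Q]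
  exact move_eq hg (Ne.symm hmi) (twoVec_apply_other hmi hmj P Q)

lemma two_move_snd (hg : PhiGood n φ) {i j m : Fin n} (hij : i ≠ j) (hmi : m ≠ i)
    (hmj : m ≠ j) (P Q : ℝ) : φ (twoVec i m P Q) = φ (twoVec i j P Q) := by
  rw [← mergeFn_twoVec_neg hij hmi hmj P Q]
  exact move_eq hg (Ne.symm hmj) (twoVec_apply_other hmi hmj P Q)

lemma exists_third (hn : 2 < n) (i j : Fin n) : ∃ m : Fin n, m ≠ i ∧ m ≠ j := by
  by_contra h
  push_neg at h
  have hsub : (Finset.univ : Finset (Fin n)) ⊆ {i, j} := by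
    intro m _
    rcases eq_or_ne m i with h1 | h1
    · simp [h1]
    · simp [h m h1]
  have h1 : (Finset.univ : Finset (Fin n)).card ≤ ({i, j} : Finset (Fin n)).card :=
    Finset.card_le_card hsub
  have h2 : ({i, j} : Finset (Fin n)).card ≤ 2 := by
    apply le_trans (Finset.card_insert_le i {j})
    simp
  rw [Finset.card_univ, Fintype.card_fin] at h1
  omega

lemma two_perm (hg : PhiGood n φ) (hn : 2 < n) {i j k l : Fin n} (hij : i ≠ j)
    (hkl : k ≠ l) (P Q : ℝ) : φ (twoVec i j P Q) = φ (twoVec k l P Q) := by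
  by_cases hik : i = k
  · by_cases hjl : j = l
    · rw [← hik, ← hjl]
    · have hli : l ≠ i := fun hc => hkl (show k = l by rw [← hik, hc])
      have hlj : l ≠ j := fun hc => hjl hc.symm
      rw [← hik]
      exact (two_move_snd hg hij hli hlj P Q).symm
  · by_cases hjl : j = l
    · have hki : k ≠ i := fun hc => hik hc.symm
      have hkj : k ≠ j := fun hc => hkl (by rw [hc, hjl])
      rw [← hjl]
      exact (two_move_fst hg hij hki hkj P Q).symm
    · by_cases hkj : k = j
      · by_cases hli : l = i
        · rw [hkj, hli]
          obtain ⟨m, hmi, hmj⟩ := exists_third hn i j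
          calc φ (twoVec i j P Q) = φ (twoVec i m P Q) :=
                (two_move_snd hg hij hmi hmj P Q).symm
            _ = φ (twoVec j m P Q) :=
                (two_move_fst hg (Ne.symm hmi) (Ne.symm hij) (Ne.symm hmj) P Q).symm
            _ = φ (twoVec j i P Q) :=
                (two_move_snd hg (Ne.symm hmj) hij (Ne.symm hmi) P Q).symm
        · have hli' : l ≠ i := hli
          have hlj : l ≠ j := fun hc => hjl hc.symm
          rw [hkj]
          calc φ (twoVec i j P Q) = φ (twoVec i l P Q) :=
                (two_move_snd hg hij hli' hlj P Q).symm
            _ = φ (twoVec j l P Q) :=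
                (two_move_fst hg (Ne.symm hli') (Ne.symm hij) hjl P Q).symm
      · have hki : k ≠ i := fun hc => hik hc.symm
        have hlk : l ≠ k := Ne.symm hkl
        have hlj : l ≠ j := fun hc => hjl hc.symm
        calc φ (twoVec i j P Q) = φ (twoVec k j P Q) :=
              (two_move_fst hg hij hki hkj P Q).symm
          _ = φ (twoVec k l P Q) :=
              (two_move_snd hg hkj hlk hlj P Q).symm

end PhiGood

lemma fin01_ne {n : ℕ} (hn : 2 < n) :
    (⟨0, by omega⟩ : Fin n) ≠ (⟨1, by omega⟩ : Fin n) := by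
  simp [Fin.ext_iff]

/-- the canonical two-coordinate vector with L1 norm 1 and sum σ -/
noncomputable def cvec (n : ℕ) (hn : 2 < n) (σ : ℝ) : Fin n → ℝ :=
  twoVec ⟨0, by omega⟩ ⟨1, by omega⟩ ((1+σ)/2) ((1-σ)/2)

lemma Su_cvec {n : ℕ} (hn : 2 < n) (σ : ℝ) : Su (cvec n hn σ) = σ := by
  rw [cvec, Su_twoVec (fin01_ne hn)]; ring

lemma Nu_cvec {n : ℕ} (hn : 2 < n) {σ : ℝ} (h1 : -1 ≤ σ) (h2 : σ ≤ 1) :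
    Nu (cvec n hn σ) = 1 := by
  rw [cvec, Nu_twoVec (fin01_ne hn) (by linarith) (by linarith)]; ring

lemma cvec_ne_zero {n : ℕ} (hn : 2 < n) (σ : ℝ) : cvec n hn σ ≠ 0 := by
  rw [cvec]
  apply twoVec_ne_zero (fin01_ne hn)
  by_cases h : σ = -1
  · right; rw [h]; norm_num
  · left; intro hc; exact h (by linarith)

/-- the one-dimensional function ψ -/
noncomputable def psiF {n : ℕ} (φ : (Fin n → ℝ) → ℝ) (hn : 2 < n) (σ : ℝ) : ℝ :=
  φ (cvec n hn σ)

namespace PhiGood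

variable {n : ℕ} {φ : (Fin n → ℝ) → ℝ}

lemma two_eval (hg : PhiGood n φ) (hn : 2 < n) {i j : Fin n} (hij : i ≠ j)
    {P Q : ℝ} (hP : 0 < P) (hQ : 0 < Q) :
    φ (twoVec i j P Q) = psiF φ hn ((P - Q)/(P + Q)) := by
  have hPQ : 0 < P + Q := by linarith
  rw [psiF]
  have hc : cvec n hn ((P-Q)/(P+Q))
      = (1/(P+Q)) • twoVec (⟨0, by omega⟩ : Fin n) ⟨1, by omega⟩ P Q := by
    rw [cvec]
    funext k
    simp only [Pi.smul_apply, smul_eq_mul, twoVec]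
    by_cases h0 : k = (⟨0, by omega⟩ : Fin n)
    · rw [if_pos h0, if_pos h0]; field_simp; ring
    · rw [if_neg h0, if_neg h0]
      by_cases h1 : k = (⟨1, by omega⟩ : Fin n)
      · rw [if_pos h1, if_pos h1]; field_simp; ring
      · rw [if_neg h1, if_neg h1, mul_zero]
  rw [hc, hg.scale _ _ (by positivity)]
  exact two_perm hg hn hij (fin01_ne hn) P Q

lemma claimU (hg : PhiGood n φ) (hn : 2 < n) :
    ∀ u : Fin n → ℝ, u ≠ 0 → 0 ≤ Su u → Su u < Nu u →
      φ u ≤ psiF φ hn (Su u / Nu u) := by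
  suffices H : ∀ m : ℕ, ∀ u : Fin n → ℝ,
      (Finset.univ.filter fun k => u k ≠ 0).card ≤ m → u ≠ 0 → 0 ≤ Su u →
      Su u < Nu u → φ u ≤ psiF φ hn (Su u / Nu u) by
    intro u
    exact H _ u le_rfl
  intro m
  induction m with
  | zero =>
    intro u hcard hu0 _ _
    exfalso
    apply hu0
    funext k
    simp only [Pi.zero_apply]
    by_contra hk
    have hmem : k ∈ Finset.univ.filter fun k => u k ≠ 0 := by simp [hk]
    have hcard0 := Finset.card_eq_zero.mp (Nat.le_zero.mp hcard)
    rw [hcard0] at hmem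
    exact absurd hmem (Finset.notMem_empty k)
  | succ m IH =>
    intro u hcard hu0 hS hSN
    have hNgne : (Finset.univ.filter fun k => u k < 0).Nonempty := by
      by_contra h
      rw [Finset.not_nonempty_iff_eq_empty, Finset.filter_eq_empty_iff] at h
      have : Nu u = Su u :=
        Finset.sum_congr rfl fun k hk => abs_of_nonneg (le_of_not_gt (h hk))
      linarith
    have hPne : (Finset.univ.filter fun k => 0 < u k).Nonempty := by
      by_contra h
      rw [Finset.not_nonempty_iff_eq_empty, Finset.filter_eq_empty_iff] at h
      obtain ⟨q, hq⟩ := hNgne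
      rw [Finset.mem_filter] at hq
      have hlt : Su u < 0 := by
        rw [Su, show (0:ℝ) = ∑ _k : Fin n, (0:ℝ) by simp]
        exact Finset.sum_lt_sum (fun i hi => le_of_not_gt (h hi))
          ⟨q, Finset.mem_univ q, hq.2⟩
      linarith
    by_cases hbig : 1 < (Finset.univ.filter fun k => 0 < u k).card ∨
        1 < (Finset.univ.filter fun k => u k < 0).card
    · have key : ∃ i j : Fin n, i ≠ j ∧ u i ≠ 0 ∧ u j ≠ 0 ∧
          |u i + u j| = |u i| + |u j| := by
        rcases hbig with h | h
        · obtain ⟨i, hi, j, hj, hij⟩ := Finset.one_lt_card.mp h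
          rw [Finset.mem_filter] at hi hj
          exact ⟨i, j, hij, ne_of_gt hi.2, ne_of_gt hj.2, by
            rw [abs_of_pos hi.2, abs_of_pos hj.2, abs_of_pos (by linarith [hi.2, hj.2])]⟩
        · obtain ⟨i, hi, j, hj, hij⟩ := Finset.one_lt_card.mp h
          rw [Finset.mem_filter] at hi hj
          refine ⟨i, j, hij, ne_of_lt hi.2, ne_of_lt hj.2, ?_⟩
          rw [abs_of_neg hi.2, abs_of_neg hj.2, abs_of_neg (by linarith [hi.2, hj.2])]
          ring
      obtain ⟨i, j, hij, hui, huj, habs⟩ := key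
      have hS' : Su (mergeFn i j u) = Su u := Su_mergeFn hij u
      have hN' : Nu (mergeFn i j u) = Nu u := by
        have hdiff := sum_diff_two hij (fun k => |mergeFn i j u k|) (fun k => |u k|)
          (fun k h1 h2 => by
            show |mergeFn i j u k| = |u k|
            rw [mergeFn_apply_other h1 h2])
        simp only [mergeFn_apply_i, mergeFn_apply_j hij] at hdiff
        have : Nu (mergeFn i j u) - Nu u = (|0| - |u i|) + (|u i + u j| - |u j|) := by
          simpa [Nu] using hdiff
        rw [habs] at this
        simp at this
        linarith
      have hcard' : (Finset.univ.filter fun k => mergeFn i j u k ≠ 0).card ≤ m := by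
        have hsub : (Finset.univ.filter fun k => mergeFn i j u k ≠ 0) ⊆
            (Finset.univ.filter fun k => u k ≠ 0).erase i := by
          intro k hk
          rw [Finset.mem_filter] at hk
          have hki : k ≠ i := by
            intro hc
            exact hk.2 (by rw [hc, mergeFn_apply_i])
          rw [Finset.mem_erase, Finset.mem_filter]
          refine ⟨hki, Finset.mem_univ k, ?_⟩
          by_cases hkj : k = j
          · rw [hkj]; exact huj
          · rw [mergeFn_apply_other hki hkj] at hk
            exact hk.2
        have h1 := Finset.card_le_card hsub
        have h2 : i ∈ Finset.univ.filter fun k => u k ≠ 0 := by simp [hui]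
        rw [Finset.card_erase_of_mem h2] at h1
        omega
      have hphi : φ u ≤ φ (mergeFn i j u) := hg.m5 u i j hij ((hg.sign u).mpr hS)
      have hu'0 : mergeFn i j u ≠ 0 := by
        intro hc
        have h1 := Nu_pos hu0
        rw [← hN', hc] at h1
        simp [Nu] at h1
      have hrec := IH (mergeFn i j u) hcard' hu'0 (by rw [hS']; exact hS)
        (by rw [hS', hN']; exact hSN)
      rw [hS', hN'] at hrec
      linarith
    · push_neg at hbig
      obtain ⟨p, hp⟩ := Finset.card_eq_one.mp
        (le_antisymm hbig.1 (Finset.Nonempty.card_pos hPne))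
      obtain ⟨q, hq⟩ := Finset.card_eq_one.mp
        (le_antisymm hbig.2 (Finset.Nonempty.card_pos hNgne))
      have hup : 0 < u p := by
        have : p ∈ Finset.univ.filter fun k => 0 < u k := by
          rw [hp]; exact Finset.mem_singleton_self p
        rw [Finset.mem_filter] at this
        exact this.2
      have huq : u q < 0 := by
        have : q ∈ Finset.univ.filter fun k => u k < 0 := by
          rw [hq]; exact Finset.mem_singleton_self q
        rw [Finset.mem_filter] at this
        exact this.2
      have hpq : p ≠ q := by
        intro hc; rw [hc] at hup; linarith
      have huk : ∀ k, k ≠ p → k ≠ q → u k = 0 := by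
        intro k h1 h2
        by_contra hk
        rcases (Ne.lt_or_gt hk) with hlt | hgt
        · have : k ∈ Finset.univ.filter fun k => u k < 0 := by simp [hlt]
          rw [hq, Finset.mem_singleton] at this
          exact h2 this
        · have : k ∈ Finset.univ.filter fun k => 0 < u k := by simp [hgt]
          rw [hp, Finset.mem_singleton] at this
          exact h1 this
      have hu_eq : u = twoVec p q (u p) (-(u q)) := by
        funext k
        by_cases h1 : k = p
        · rw [h1, twoVec_apply_i]
        by_cases h2 : k = q
        · rw [h2, twoVec_apply_j hpq]; ring
        · rw [twoVec_apply_other h1 h2, huk k h1 h2]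
      rw [hu_eq, two_eval hg hn hpq hup (by linarith), Su_twoVec hpq,
        Nu_twoVec hpq (le_of_lt hup) (by linarith)]

lemma claimL (hg : PhiGood n φ) (hn : 2 < n) :
    ∀ u : Fin n → ℝ, u ≠ 0 → ∀ σ : ℝ, 0 ≤ σ → σ * Nu u < Su u →
      psiF φ hn σ ≤ φ u := by
  suffices H : ∀ m : ℕ, ∀ u : Fin n → ℝ,
      (Finset.univ.filter fun k => u k ≠ 0).card ≤ m → u ≠ 0 → ∀ σ : ℝ, 0 ≤ σ →
      σ * Nu u < Su u → psiF φ hn σ ≤ φ u by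
    intro u hu σ h1 h2
    exact H _ u le_rfl hu σ h1 h2
  intro m
  induction m with
  | zero =>
    intro u hcard hu0 _ _ _
    exfalso
    apply hu0
    funext k
    simp only [Pi.zero_apply]
    by_contra hk
    have hmem : k ∈ Finset.univ.filter fun k => u k ≠ 0 := by simp [hk]
    have hcard0 := Finset.card_eq_zero.mp (Nat.le_zero.mp hcard)
    rw [hcard0] at hmem
    exact absurd hmem (Finset.notMem_empty k)
  | succ m IH =>
    intro u hcard hu0 σ hσ0 hσN
    have hNpos := Nu_pos hu0
    have hSpos : 0 < Su u :=
      lt_of_le_of_lt (mul_nonneg hσ0 (Nu_nonneg u)) hσN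
    have hσ1 : σ < 1 := by nlinarith [Su_le_Nu u]
    by_cases hneg : ∃ j, u j < 0
    · obtain ⟨j, hj⟩ := hneg
      have hipos : ∃ i, 0 < u i := by
        by_contra h
        push_neg at h
        have : Su u ≤ 0 := Finset.sum_nonpos fun k _ => h k
        linarith
      obtain ⟨i, hi⟩ := hipos
      have hij : i ≠ j := by intro hc; rw [hc] at hi; linarith
      set q := -(u j) with hqdef
      have hq : 0 < q := by rw [hqdef]; linarith
      set lam := (1+σ)/(1-σ) with hlam
      have hlam1 : 1 ≤ lam := by
        rw [hlam, le_div_iff₀ (by linarith)]; linarith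
      have hlampos : 0 < lam := by linarith
      have hlameq : lam * (1-σ) = 1+σ := by
        rw [hlam, div_mul_cancel₀ _ (by linarith : (1:ℝ)-σ ≠ 0)]
      by_cases hcase : lam * q ≤ u i
      · set a := twoVec i j (lam*q) q with hadef
        set b := u - a with hbdef
        have hab : a + b = u := by
          funext k; simp [hbdef]
        have hai : a i = lam*q := by rw [hadef, twoVec_apply_i]
        have haj : a j = -q := by rw [hadef, twoVec_apply_j hij]
        have hak : ∀ k, k ≠ i → k ≠ j → a k = 0 := fun k h1 h2 => by
          rw [hadef, twoVec_apply_other h1 h2]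
        have hbi : b i = u i - lam*q := by rw [hbdef, Pi.sub_apply, hai]
        have hbj : b j = 0 := by
          rw [hbdef, Pi.sub_apply, haj, hqdef]; ring
        have hbk : ∀ k, k ≠ i → k ≠ j → b k = u k := fun k h1 h2 => by
          rw [hbdef, Pi.sub_apply, hak k h1 h2, sub_zero]
        have hbi_nonneg : 0 ≤ b i := by rw [hbi]; linarith
        have hSb : Su b = Su u - (lam*q - q) := by
          have hd : (∑ k, b k) - (∑ k, u k) = (b i - u i) + (b j - u j) :=
            sum_diff_two hij b u hbk
          rw [hbi, hbj] at hd
          simp only [Su]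
          rw [hqdef] at hd ⊢
          linarith
        have hNb : Nu b = Nu u - (lam*q + q) := by
          have hd : (∑ k, |b k|) - (∑ k, |u k|) = (|b i| - |u i|) + (|b j| - |u j|) :=
            sum_diff_two hij _ _ (fun k h1 h2 => by
              show |b k| = |u k|
              rw [hbk k h1 h2])
          rw [hbi, hbj, abs_of_nonneg (by linarith : (0:ℝ) ≤ u i - lam*q),
            abs_of_pos hi, abs_of_neg hj, abs_zero] at hd
          simp only [Nu]
          rw [hqdef] at hd ⊢
          linarith
        have hlamq : lam * q * (1-σ) = (1+σ) * q := by
          rw [← hlameq]; ring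
        have hinv : σ * Nu b < Su b := by
          rw [hSb, hNb]
          nlinarith [hlamq, hσN]
        have hb0 : b ≠ 0 := by
          intro hc
          rw [hc] at hinv
          have h1 : Su (0 : Fin n → ℝ) = 0 := by simp [Su]
          have h2 : Nu (0 : Fin n → ℝ) = 0 := by simp [Nu]
          rw [h1, h2] at hinv
          linarith
        have hcard' : (Finset.univ.filter fun k => b k ≠ 0).card ≤ m := by
          have hsub : (Finset.univ.filter fun k => b k ≠ 0) ⊆
              (Finset.univ.filter fun k => u k ≠ 0).erase j := by
            intro k hk
            rw [Finset.mem_filter] at hk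
            have hkj : k ≠ j := by
              intro hc; exact hk.2 (by rw [hc, hbj])
            rw [Finset.mem_erase, Finset.mem_filter]
            refine ⟨hkj, Finset.mem_univ k, ?_⟩
            by_cases hki : k = i
            · rw [hki]; exact ne_of_gt hi
            · rw [← hbk k hki hkj]; exact hk.2
          have h1 := Finset.card_le_card hsub
          have h2 : j ∈ Finset.univ.filter fun k => u k ≠ 0 := by
            simp [ne_of_lt hj]
          rw [Finset.card_erase_of_mem h2] at h1
          omega
        have hrecb := IH b hcard' hb0 σ hσ0 hinv
        have hphia : φ a = psiF φ hn σ := by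
          rw [hadef, two_eval hg hn hij (mul_pos hlampos hq) hq]
          congr 1
          rw [div_eq_iff (ne_of_gt (by nlinarith : (0:ℝ) < lam*q + q))]
          linear_combination q * hlameq
        have hphia_half : 1/2 ≤ φ a :=
          (hg.sign a).mpr (by rw [hadef, Su_twoVec hij]; nlinarith)
        have hphib_half : 1/2 ≤ φ b :=
          (hg.sign b).mpr
            (le_of_lt (lt_of_le_of_lt (mul_nonneg hσ0 (Nu_nonneg b)) hinv))
        have hm3 := hg.m3 a b hphia_half hphib_half
        rw [hab] at hm3
        rcases hm3 with hlt | ⟨he1, he2⟩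
        · have : psiF φ hn σ ≤ min (φ a) (φ b) :=
            le_min (le_of_eq hphia.symm) hrecb
          linarith
        · rw [he1, hphia]
      · push_neg at hcase
        set Q2 := u i / lam with hQ2
        have hQ2pos : 0 < Q2 := by rw [hQ2]; exact div_pos hi hlampos
        have hQlam : Q2 * lam = u i := by
          rw [hQ2, div_mul_cancel₀ _ (ne_of_gt hlampos)]
        have hQ2q : Q2 < q := by
          rw [hQ2, div_lt_iff₀ hlampos]
          nlinarith
        set a := twoVec i j (u i) Q2 with hadef
        set b := u - a with hbdef
        have hab : a + b = u := by
          funext k; simp [hbdef]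
        have hai : a i = u i := by rw [hadef, twoVec_apply_i]
        have haj : a j = -Q2 := by rw [hadef, twoVec_apply_j hij]
        have hak : ∀ k, k ≠ i → k ≠ j → a k = 0 := fun k h1 h2 => by
          rw [hadef, twoVec_apply_other h1 h2]
        have hbi : b i = 0 := by rw [hbdef, Pi.sub_apply, hai, sub_self]
        have hbj : b j = u j + Q2 := by rw [hbdef, Pi.sub_apply, haj]; ring
        have hbj_neg' : u j + Q2 < 0 := by
          have h1 : u j = -q := by rw [hqdef]; ring
          rw [h1]; linarith
        have hbk : ∀ k, k ≠ i → k ≠ j → b k = u k := fun k h1 h2 => by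
          rw [hbdef, Pi.sub_apply, hak k h1 h2, sub_zero]
        have hSb : Su b = Su u - (u i - Q2) := by
          have hd : (∑ k, b k) - (∑ k, u k) = (b i - u i) + (b j - u j) :=
            sum_diff_two hij b u hbk
          rw [hbi, hbj] at hd
          simp only [Su]
          linarith
        have hNb : Nu b = Nu u - (u i + Q2) := by
          have hd : (∑ k, |b k|) - (∑ k, |u k|) = (|b i| - |u i|) + (|b j| - |u j|) :=
            sum_diff_two hij _ _ (fun k h1 h2 => by
              show |b k| = |u k|
              rw [hbk k h1 h2])
          rw [hbi, hbj, abs_zero, abs_of_pos hi, abs_of_neg hj,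
            abs_of_neg hbj_neg'] at hd
          simp only [Nu]
          linarith
        have hkey : Q2 * (1+σ) = u i * (1-σ) := by
          linear_combination (1-σ)*hQlam - Q2*hlameq
        have hinv : σ * Nu b < Su b := by
          rw [hSb, hNb]
          nlinarith [hkey, hσN]
        have hb0 : b ≠ 0 := by
          intro hc
          rw [hc] at hinv
          have h1 : Su (0 : Fin n → ℝ) = 0 := by simp [Su]
          have h2 : Nu (0 : Fin n → ℝ) = 0 := by simp [Nu]
          rw [h1, h2] at hinv
          linarith
        have hcard' : (Finset.univ.filter fun k => b k ≠ 0).card ≤ m := by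
          have hsub : (Finset.univ.filter fun k => b k ≠ 0) ⊆
              (Finset.univ.filter fun k => u k ≠ 0).erase i := by
            intro k hk
            rw [Finset.mem_filter] at hk
            have hki : k ≠ i := by
              intro hc; exact hk.2 (by rw [hc, hbi])
            rw [Finset.mem_erase, Finset.mem_filter]
            refine ⟨hki, Finset.mem_univ k, ?_⟩
            by_cases hkj : k = j
            · rw [hkj]; exact ne_of_lt hj
            · rw [← hbk k hki hkj]; exact hk.2
          have h1 := Finset.card_le_card hsub
          have h2 : i ∈ Finset.univ.filter fun k => u k ≠ 0 := by
            simp [ne_of_gt hi]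
          rw [Finset.card_erase_of_mem h2] at h1
          omega
        have hrecb := IH b hcard' hb0 σ hσ0 hinv
        have hphia : φ a = psiF φ hn σ := by
          rw [hadef, two_eval hg hn hij hi hQ2pos]
          congr 1
          rw [div_eq_iff (ne_of_gt (by nlinarith : (0:ℝ) < u i + Q2))]
          linear_combination Q2 * hlameq + (σ - 1) * hQlam
        have hphia_half : 1/2 ≤ φ a :=
          (hg.sign a).mpr (by
            rw [hadef, Su_twoVec hij]
            nlinarith [hkey])
        have hphib_half : 1/2 ≤ φ b :=
          (hg.sign b).mpr
            (le_of_lt (lt_of_le_of_lt (mul_nonneg hσ0 (Nu_nonneg b)) hinv))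
        have hm3 := hg.m3 a b hphia_half hphib_half
        rw [hab] at hm3
        rcases hm3 with hlt | ⟨he1, he2⟩
        · have : psiF φ hn σ ≤ min (φ a) (φ b) :=
            le_min (le_of_eq hphia.symm) hrecb
          linarith
        · rw [he1, hphia]
    · push_neg at hneg
      rw [psiF]
      exact (hg.m4 u hneg hu0 (cvec n hn σ)).1

lemma wm_pos (hg : PhiGood n φ) (hn : 2 < n) {u w : Fin n → ℝ} (hu : u ≠ 0)
    (hw : w ≠ 0) (hSu : 0 < Su u) (hlt : Su u * Nu w < Su w * Nu u) :
    φ u ≤ φ w := by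
  have hNu := Nu_pos hu
  have hNw := Nu_pos hw
  have hSw : 0 < Su w := by nlinarith
  have h1 : Su u < Nu u := by nlinarith [Su_le_Nu w]
  have h2 := claimU hg hn u hu (le_of_lt hSu) h1
  have h3 := claimL hg hn w hw (Su u / Nu u) (by positivity) (by
    rw [div_mul_eq_mul_div, div_lt_iff₀ hNu]
    linarith)
  linarith

lemma wm (hg : PhiGood n φ) (hn : 2 < n) {u w : Fin n → ℝ} (hu : u ≠ 0)
    (hw : w ≠ 0) (hlt : Su u * Nu w < Su w * Nu u) : φ u ≤ φ w := by
  by_cases h1 : 0 < Su u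
  · exact wm_pos hg hn hu hw h1 hlt
  · push_neg at h1
    by_cases h2 : 0 ≤ Su w
    · have ha : φ u ≤ 1/2 := by
        by_contra hc
        push_neg at hc
        have := (hg.sign_lt u).mp hc
        linarith
      have hb : 1/2 ≤ φ w := (hg.sign w).mpr h2
      linarith
    · push_neg at h2
      have hrev : φ (-w) ≤ φ (-u) := by
        apply wm_pos hg hn (fun hc => hw (by rw [← neg_neg w, hc, neg_zero]))
          (fun hc => hu (by rw [← neg_neg u, hc, neg_zero]))
        · rw [Su_neg]; linarith
        · rw [Su_neg, Su_neg, Nu_neg, Nu_neg]; nlinarith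
      rw [hg.neg, hg.neg] at hrev
      linarith

lemma nonneg_of_Su_eq_Nu {u : Fin n → ℝ} (h : Su u = Nu u) : ∀ k, 0 ≤ u k := by
  intro k
  have hsum : ∑ j, (|u j| - u j) = 0 := by
    rw [Finset.sum_sub_distrib]
    simp only [Su, Nu] at h
    linarith
  have hterm := (Finset.sum_eq_zero_iff_of_nonneg
    (fun j (_ : j ∈ Finset.univ) => by linarith [le_abs_self (u j)] :
      ∀ j ∈ Finset.univ, 0 ≤ |u j| - u j)).mp hsum k (Finset.mem_univ k)
  have := abs_nonneg (u k)
  linarith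

lemma level_eq_top (hg : PhiGood n φ) {u w : Fin n → ℝ} (hu : u ≠ 0) (hw : w ≠ 0)
    (hSu : Su u = Nu u) (hSw : Su w = Nu w) : φ u = φ w :=
  le_antisymm ((hg.m4 w (nonneg_of_Su_eq_Nu hSw) hw u).1)
    ((hg.m4 u (nonneg_of_Su_eq_Nu hSu) hu w).1)

lemma Su_single {n : ℕ} (i : Fin n) (a : ℝ) : Su (Pi.single i a) = a := by
  rw [Su, Finset.sum_eq_single i]
  · rw [Pi.single_eq_same]
  · intro b _ hb; rw [Pi.single_eq_of_ne hb]
  · intro hi; exact absurd (Finset.mem_univ i) hi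

lemma sum_diff_one {n : ℕ} {i : Fin n} (f g : Fin n → ℝ)
    (hf : ∀ k, k ≠ i → f k = g k) :
    (∑ k, f k) - (∑ k, g k) = f i - g i := by
  rw [← Finset.sum_sub_distrib]
  rw [Finset.sum_eq_single i]
  · intro b _ hb; rw [hf b hb]; ring
  · intro hi; exact absurd (Finset.mem_univ i) hi

lemma level_eq (hg : PhiGood n φ) (hn : 2 < n) {u w : Fin n → ℝ} (hu : u ≠ 0)
    (hw : w ≠ 0) (heq : Su u * Nu w = Su w * Nu u) : φ u = φ w := by
  have hNu := Nu_pos hu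
  have hNw := Nu_pos hw
  by_cases htop : Su w = Nu w
  · have hSu : Su u = Nu u := by
      have h := heq
      rw [htop] at h
      have h2 : Su u * Nu w = Nu u * Nu w := by rw [h]; ring
      exact mul_right_cancel₀ (ne_of_gt hNw) h2
    exact level_eq_top hg hu hw hSu htop
  by_cases hbot : Su w = -(Nu w)
  · have hSu : Su u = -(Nu u) := by
      have h := heq
      rw [hbot] at h
      have h2 : Su u * Nu w = (-(Nu u)) * Nu w := by rw [h]; ring
      exact mul_right_cancel₀ (ne_of_gt hNw) h2
    have hneg : φ (-u) = φ (-w) := by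
      apply level_eq_top hg (fun hc => hu (by rw [← neg_neg u, hc, neg_zero]))
        (fun hc => hw (by rw [← neg_neg w, hc, neg_zero]))
      · rw [Su_neg, Nu_neg, hSu]; ring
      · rw [Su_neg, Nu_neg, hbot]; ring
    rw [hg.neg, hg.neg] at hneg
    linarith
  · have hwlt : Su w < Nu w := lt_of_le_of_ne (Su_le_Nu w) htop
    have hwgt : -(Nu w) < Su w := lt_of_le_of_ne (neg_Nu_le_Su w) (Ne.symm hbot)
    have hult : Su u < Nu u := by nlinarith
    have hex : ∃ i, 0 < w i := by
      by_contra h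
      push_neg at h
      apply hbot
      rw [Su, Nu, ← Finset.sum_neg_distrib]
      exact Finset.sum_congr rfl fun k _ => by
        rw [abs_of_nonpos (h k)]; ring
    obtain ⟨i, hi⟩ := hex
    set g : ℝ → (Fin n → ℝ) := fun t => w + t • (Pi.single i (1:ℝ) : Fin n → ℝ) with hgdef
    have hg0 : g 0 = w := by rw [hgdef]; simp
    have hSg : ∀ t : ℝ, Su (g t) = Su w + t := by
      intro t
      rw [hgdef, Su_add, Su_smul, Su_single, mul_one]
    have hNg : ∀ t : ℝ, -(w i) < t → Nu (g t) = Nu w + t := by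
      intro t ht
      have hd : (∑ k, |g t k|) - (∑ k, |w k|) = |g t i| - |w i| := by
        apply sum_diff_one
        intro k hk
        show |(w + t • (Pi.single i (1:ℝ) : Fin n → ℝ)) k| = |w k|
        rw [Pi.add_apply, Pi.smul_apply, Pi.single_eq_of_ne hk, smul_eq_mul,
          mul_zero, add_zero]
      have hgi : g t i = w i + t := by
        rw [hgdef]
        simp [Pi.single_eq_same]
      rw [hgi, abs_of_pos hi, abs_of_pos (by linarith : (0:ℝ) < w i + t)] at hd
      simp only [Nu]
      linarith
    have hgne : ∀ t : ℝ, -(w i) < t → g t ≠ 0 := by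
      intro t ht hc
      have h1 : Nu (g t) = Nu w + t := hNg t ht
      rw [hc] at h1
      have h2 : Nu (0 : Fin n → ℝ) = 0 := by simp [Nu]
      rw [h2] at h1
      have h3 : w i ≤ Nu w := le_trans (le_abs_self _) (Finset.single_le_sum
        (f := fun k => |w k|) (fun k _ => abs_nonneg _) (Finset.mem_univ i))
      linarith
    have hub : ∀ t : ℝ, 0 < t → φ u ≤ φ (g t) := by
      intro t ht
      apply wm hg hn hu (hgne t (by linarith))
      rw [hSg, hNg t (by linarith)]
      nlinarith
    have hlb : ∀ t : ℝ, -(w i) < t → t < 0 → φ (g t) ≤ φ u := by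
      intro t ht1 ht2
      apply wm hg hn (hgne t ht1) hu
      rw [hSg, hNg t ht1]
      nlinarith
    have hcont : ContinuousAt (fun t : ℝ => φ (g t)) 0 := by
      have hφ : ContinuousAt φ w := by
        apply hg.cont.continuousAt
        exact IsOpen.mem_nhds isOpen_compl_singleton hw
      have hgc : Continuous g := by
        rw [hgdef]
        exact continuous_const.add (continuous_id.smul continuous_const)
      have hφ' : ContinuousAt φ (g 0) := by rw [hg0]; exact hφ
      exact hφ'.comp hgc.continuousAt
    have htends : Filter.Tendsto (fun t : ℝ => φ (g t)) (nhdsWithin 0 (Set.Ioi 0))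
        (nhds (φ w)) := by
      have h := hcont.tendsto
      rw [hg0] at h
      exact h.mono_left nhdsWithin_le_nhds
    have htends2 : Filter.Tendsto (fun t : ℝ => φ (g t)) (nhdsWithin 0 (Set.Iio 0))
        (nhds (φ w)) := by
      have h := hcont.tendsto
      rw [hg0] at h
      exact h.mono_left nhdsWithin_le_nhds
    have hle1 : φ u ≤ φ w := by
      refine ge_of_tendsto htends ?_
      filter_upwards [self_mem_nhdsWithin] with t ht
      exact hub t ht
    have hle2 : φ w ≤ φ u := by
      refine le_of_tendsto htends2 ?_
      have hmem : Set.Ioo (-(w i)) 0 ∈ nhdsWithin (0:ℝ) (Set.Iio 0) :=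
        Ioo_mem_nhdsLT_of_mem ⟨by linarith, le_refl 0⟩
      filter_upwards [hmem] with t ht
      exact hlb t ht.1 ht.2
    exact le_antisymm hle1 hle2

lemma phi_eq_psi (hg : PhiGood n φ) (hn : 2 < n) {u : Fin n → ℝ} (hu : u ≠ 0) :
    φ u = psiF φ hn (Su u / Nu u) := by
  have hNu := Nu_pos hu
  have hb1 : -1 ≤ Su u / Nu u := by
    rw [le_div_iff₀ hNu]
    linarith [neg_Nu_le_Su u]
  have hb2 : Su u / Nu u ≤ 1 := by
    rw [div_le_one hNu]
    exact Su_le_Nu u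
  rw [psiF]
  apply level_eq hg hn hu (cvec_ne_zero hn _)
  rw [Su_cvec, Nu_cvec hn hb1 hb2, mul_one, div_mul_cancel₀ _ (ne_of_gt hNu)]

lemma psi_mono_le (hg : PhiGood n φ) (hn : 2 < n) {σ1 σ2 : ℝ} (h1 : -1 ≤ σ1)
    (h2 : σ2 ≤ 1) (hle : σ1 ≤ σ2) : psiF φ hn σ1 ≤ psiF φ hn σ2 := by
  rcases eq_or_lt_of_le hle with he | hlt
  · rw [he]
  · apply wm hg hn (cvec_ne_zero hn σ1) (cvec_ne_zero hn σ2)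
    rw [Su_cvec, Su_cvec, Nu_cvec hn h1 (by linarith), Nu_cvec hn (by linarith) h2]
    simpa using hlt

lemma psi_sym (hg : PhiGood n φ) (hn : 2 < n) {σ : ℝ} (h1 : -1 ≤ σ) (h2 : σ ≤ 1) :
    psiF φ hn (-σ) = 1 - psiF φ hn σ := by
  have key : φ (cvec n hn (-σ)) = φ (-(cvec n hn σ)) := by
    apply level_eq hg hn (cvec_ne_zero hn _)
      (fun hc => cvec_ne_zero hn σ (by rw [← neg_neg (cvec n hn σ), hc, neg_zero]))
    rw [Su_cvec, Su_neg, Su_cvec, Nu_neg, Nu_cvec hn h1 h2]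
    rw [Nu_cvec hn (by linarith) (by linarith)]
  rw [psiF, psiF, key, hg.neg]

lemma cvec_one_nonneg (hn : 2 < n) : ∀ k, 0 ≤ cvec n hn 1 k := by
  intro k
  rw [cvec]
  unfold twoVec
  split_ifs <;> norm_num

lemma psi_lt_top (hg : PhiGood n φ) (hn : 2 < n) {σ : ℝ} (h2 : σ < 1) :
    psiF φ hn σ < psiF φ hn 1 := by
  rw [psiF, psiF]
  apply (hg.m4 (cvec n hn 1) (cvec_one_nonneg hn) (cvec_ne_zero hn 1)
    (cvec n hn σ)).2
  rintro ⟨hpos, -⟩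
  have := hpos (⟨1, by omega⟩ : Fin n)
  rw [cvec, twoVec_apply_j (fin01_ne hn)] at this
  linarith

lemma psi_strict_nonneg (hg : PhiGood n φ) (hn : 2 < n) {σ1 σ2 : ℝ} (h0 : 0 ≤ σ1)
    (hlt : σ1 < σ2) (h2 : σ2 ≤ 1) : psiF φ hn σ1 < psiF φ hn σ2 := by
  by_cases hσ2 : σ2 = 1
  · rw [hσ2]
    exact psi_lt_top hg hn (by linarith)
  have h21 : σ2 < 1 := lt_of_le_of_ne h2 hσ2
  by_contra hc
  push_neg at hc
  have hmono := psi_mono_le hg hn (by linarith : (-1:ℝ) ≤ σ1) h2 (le_of_lt hlt)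
  have heq : psiF φ hn σ1 = psiF φ hn σ2 := le_antisymm hmono hc
  set σ := (σ1+σ2)/2 with hσdef
  have hσa : σ1 < σ := by rw [hσdef]; linarith
  have hσb : σ < σ2 := by rw [hσdef]; linarith
  set t := 2*(1-σ2)/(σ2-σ1) + 1 with htdef
  have htpos : 0 < t := by
    have h3 : 0 ≤ 2*(1-σ2)/(σ2-σ1) := div_nonneg (by linarith) (by linarith)
    rw [htdef]; linarith
  set P := t*(1+σ)/2 + 1 with hPdef
  set Q := t*(1-σ)/2 with hQdef
  have hP : 0 < P := by
    have : 0 ≤ t*(1+σ)/2 := by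
      apply div_nonneg _ (by norm_num)
      apply mul_nonneg (le_of_lt htpos) (by rw [hσdef]; linarith)
    rw [hPdef]; linarith
  have hQ : 0 < Q := by
    rw [hQdef]
    apply div_pos _ (by norm_num)
    apply mul_pos htpos (by rw [hσdef]; linarith)
  set i0 : Fin n := ⟨0, by omega⟩ with hi0
  set i1 : Fin n := ⟨1, by omega⟩ with hi1
  have hab : (t • cvec n hn σ) + cvec n hn 1 = twoVec i0 i1 P Q := by
    funext k
    simp only [Pi.add_apply, Pi.smul_apply, smul_eq_mul, cvec, twoVec,
      hPdef, hQdef, hi0, hi1]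
    split_ifs <;> ring
  have hsP : Su (twoVec i0 i1 P Q) = t*σ + 1 := by
    rw [Su_twoVec (fin01_ne hn), hPdef, hQdef]; ring
  have hsN : Nu (twoVec i0 i1 P Q) = t + 1 := by
    rw [Nu_twoVec (fin01_ne hn) (le_of_lt hP) (le_of_lt hQ), hPdef, hQdef]; ring
  have hsstar1 : σ1 ≤ (t*σ + 1)/(t+1) := by
    rw [le_div_iff₀ (by linarith)]
    nlinarith
  have hsstar2 : (t*σ + 1)/(t+1) ≤ σ2 := by
    rw [div_le_iff₀ (by linarith)]
    have ht2 : t*(σ2-σ) ≥ 1-σ2 := by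
      have e1 : σ2 - σ = (σ2-σ1)/2 := by rw [hσdef]; ring
      have hne' : σ2-σ1 ≠ 0 := by intro hc; rw [sub_eq_zero] at hc; linarith
      have key : (2*(1-σ2)/(σ2-σ1)) * ((σ2-σ1)/2) = 1-σ2 := by
        field_simp
      have expand : (2*(1-σ2)/(σ2-σ1)+1)*((σ2-σ1)/2)
          = (2*(1-σ2)/(σ2-σ1))*((σ2-σ1)/2) + (σ2-σ1)/2 := by ring
      rw [e1, htdef, expand, key]
      linarith
    nlinarith
  have hφab : φ (twoVec i0 i1 P Q) = psiF φ hn ((t*σ+1)/(t+1)) := by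
    rw [two_eval hg hn (fin01_ne hn) hP hQ]
    congr 1
    rw [hPdef, hQdef]
    congr 1 <;> ring
  have hsmem : psiF φ hn ((t*σ+1)/(t+1)) = psiF φ hn σ1 := by
    apply le_antisymm
    · rw [heq]
      exact psi_mono_le hg hn (by linarith) h2 hsstar2
    · exact psi_mono_le hg hn (by linarith) (by
        rw [div_le_one (by linarith : (0:ℝ) < t+1)]; nlinarith) hsstar1
  have hφa : φ (t • cvec n hn σ) = psiF φ hn σ1 := by
    rw [hg.scale _ t htpos]
    apply le_antisymm
    · rw [heq]
      exact psi_mono_le hg hn (by linarith) h2 (le_of_lt hσb)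
    · exact psi_mono_le hg hn (by linarith) (by linarith) (le_of_lt hσa)
  have hφb : φ (cvec n hn 1) = psiF φ hn 1 := rfl
  have hMgt : psiF φ hn σ1 < psiF φ hn 1 := psi_lt_top hg hn (by linarith)
  have hha : 1/2 ≤ φ (t • cvec n hn σ) := by
    rw [hg.sign, Su_smul, Su_cvec]
    apply mul_nonneg (le_of_lt htpos) (by rw [hσdef]; linarith)
  have hhb : 1/2 ≤ φ (cvec n hn 1) := by
    rw [hg.sign, Su_cvec]; norm_num
  have hm3 := hg.m3 _ _ hha hhb
  rw [hab, hφab, hsmem, hφa, hφb] at hm3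
  rcases hm3 with hlt' | ⟨he1', he2'⟩
  · rw [min_eq_left (le_of_lt hMgt)] at hlt'
    exact lt_irrefl _ hlt'
  · rw [he2'] at hMgt
    exact lt_irrefl _ hMgt

lemma psi_strict (hg : PhiGood n φ) (hn : 2 < n) :
    StrictMonoOn (psiF φ hn) (Set.Icc (-1) 1) := by
  intro σ1 h1 σ2 h2 hlt
  rcases le_or_gt 0 σ1 with h0 | h0
  · exact psi_strict_nonneg hg hn h0 hlt h2.2
  · rcases le_or_gt σ2 0 with h0' | h0'
    · have hstr := psi_strict_nonneg hg hn (by linarith) (by linarith : -σ2 < -σ1)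
        (by linarith [h1.1])
      have e1 := psi_sym hg hn h1.1 h1.2
      have e2 := psi_sym hg hn h2.1 h2.2
      linarith
    · have hm : psiF φ hn 0 = 1/2 := by
        rw [psiF]
        exact (hg.sign_eq _).mpr (by rw [Su_cvec])
      have hs1 : psiF φ hn σ1 < 1/2 := by
        have hstr := psi_strict_nonneg hg hn (le_refl 0) (by linarith : (0:ℝ) < -σ1)
          (by linarith [h1.1])
        have e1 := psi_sym hg hn h1.1 h1.2
        rw [hm] at hstr
        linarith
      have hs2 : 1/2 < psiF φ hn σ2 := by
        have hstr := psi_strict_nonneg hg hn (le_refl 0) h0' h2.2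
        rw [hm] at hstr
        exact hstr
      linarith

lemma psi_cont (hg : PhiGood n φ) (hn : 2 < n) :
    ContinuousOn (psiF φ hn) (Set.Icc (-1) 1) := by
  have hc : Continuous (fun σ => cvec n hn σ) := by
    apply continuous_pi
    intro m
    simp only [cvec, twoVec]
    split_ifs
    · exact (continuous_const.add continuous_id).div_const 2
    · exact ((continuous_const.sub continuous_id).div_const 2).neg
    · exact continuous_const
  exact ContinuousOn.comp hg.cont hc.continuousOn
    (fun σ _ => cvec_ne_zero hn σ)

end PhiGood

/-! ### From the axioms to the representation -/

lemma axioms_to_rep {n : ℕ} (hn : 2 < n) {ρ : (Fin n → ℝ) → (Fin n → ℝ) → ℝ}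
    (hρ : IsBCR ρ) (hnonnull : ∀ k, ¬ NullAttr ρ k) (hM1 : M1 ρ) (hM2 : M2 ρ)
    (hM3 : M3 ρ) (hM4 : M4 ρ) (hM5 : M5 ρ) : ∃ G β, IsL1Rep ρ G β := by
  have hhalf : ∀ x, ρ x x = 1/2 := bcr_self hρ
  -- scaling invariance
  have hscale : ∀ (v : Fin n → ℝ) (α : ℝ), 0 < α → α < 1 → ρ v 0 = ρ (α • v) 0 := by
    intro v α h0 h1
    have h := hM2 v 0 0 α h0 h1
    simpa using h
  have hscale_all : ∀ (v : Fin n → ℝ) (t : ℝ), 0 < t → ρ (t • v) 0 = ρ v 0 := by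
    intro v t ht
    rcases lt_trichotomy t 1 with h | h | h
    · exact (hscale v t ht h).symm
    · rw [h, one_smul]
    · have h2 := hscale (t • v) (1/t) (by positivity) (by
        rw [div_lt_one ht]; exact h)
      rw [smul_smul, one_div, inv_mul_cancel₀ (ne_of_gt ht), one_smul] at h2
      exact h2
  -- translation invariance
  have hshift : ∀ x y : Fin n → ℝ, ρ x y = ρ (x - y) 0 := by
    intro x y
    have h := hM2 x y (-y) (1/2) (by norm_num) (by norm_num)
    have e1 : (1/2 : ℝ) • x + ((1:ℝ) - 1/2) • (-y) = (1/2 : ℝ) • (x - y) := by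
      funext k
      simp only [Pi.add_apply, Pi.smul_apply, Pi.neg_apply, Pi.sub_apply,
        smul_eq_mul]
      ring
    have e2 : (1/2 : ℝ) • y + ((1:ℝ) - 1/2) • (-y) = (0 : Fin n → ℝ) := by
      funext k
      simp only [Pi.add_apply, Pi.smul_apply, Pi.neg_apply, Pi.zero_apply,
        smul_eq_mul]
      ring
    rw [e1, e2] at h
    rw [h, hscale_all (x - y) (1/2) (by norm_num)]
  have hneg : ∀ v : Fin n → ℝ, ρ (-v) 0 = 1 - ρ v 0 := by
    intro v
    have h1 : ρ (0 : Fin n → ℝ) (-v) = ρ v 0 := by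
      rw [hshift 0 (-v)]
      congr 1
      funext k
      simp
    rw [hρ.2 (-v) 0, h1]
  have hcontv : ContinuousOn (fun v : Fin n → ℝ => ρ v 0) {v | v ≠ 0} := by
    have hmap : Continuous (fun v : Fin n → ℝ => (v, (0 : Fin n → ℝ))) :=
      continuous_id.prodMk continuous_const
    exact hM1.comp hmap.continuousOn (fun v hv => hv)
  -- the upper contour cone
  set C : Set (Fin n → ℝ) := {v | 1/2 ≤ ρ v 0} with hCdef
  have hC0 : (0 : Fin n → ℝ) ∈ C := by
    show 1/2 ≤ ρ 0 0
    rw [hhalf]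
  have hCadd : ∀ v w, v ∈ C → w ∈ C → v + w ∈ C := by
    intro v w hv hw
    have h1 : ρ (v + w) w = ρ v 0 := by
      rw [hshift (v+w) w, add_sub_cancel_right]
    have h := hM3 (v+w) w 0 (by rw [h1]; exact hv) hw
    show 1/2 ≤ ρ (v+w) 0
    rcases h with h | ⟨h, _⟩
    · have hmin : (1:ℝ)/2 ≤ min (ρ (v+w) w) (ρ w 0) := le_min (by rw [h1]; exact hv) hw
      linarith
    · rw [h, h1]; exact hv
  have hCsmul : ∀ (t : ℝ) (v), 0 < t → v ∈ C → t • v ∈ C := by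
    intro t v ht hv
    show 1/2 ≤ ρ (t • v) 0
    rw [hscale_all v t ht]
    exact hv
  have hCconv : Convex ℝ C := by
    intro v hv w hw a b ha hb hab
    rcases eq_or_lt_of_le ha with ha0 | ha0
    · have hb1 : b = 1 := by linarith
      rw [← ha0, hb1]
      simpa using hw
    rcases eq_or_lt_of_le hb with hb0 | hb0
    · have ha1 : a = 1 := by linarith
      rw [← hb0, ha1]
      simpa using hv
    exact hCadd _ _ (hCsmul a v ha0 hv) (hCsmul b w hb0 hw)
  have hcompl : Cᶜ = {v | ρ v 0 < 1/2} := by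
    ext v
    simp [hCdef, not_le]
  have hDopen : IsOpen Cᶜ := by
    rw [hcompl]
    have heq : {v : Fin n → ℝ | ρ v 0 < 1/2}
        = {v : Fin n → ℝ | v ≠ 0} ∩ ((fun v => ρ v 0) ⁻¹' (Set.Iio (1/2))) := by
      ext v
      constructor
      · intro h
        refine ⟨fun hc => ?_, h⟩
        rw [Set.mem_setOf_eq, hc, hhalf] at h
        linarith
      · rintro ⟨-, h⟩
        exact h
    rw [heq]
    exact hcontv.isOpen_inter_preimage isOpen_compl_singleton isOpen_Iio
  have hDconv : Convex ℝ Cᶜ := by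
    intro v hv w hw a b ha hb hab
    rcases eq_or_lt_of_le ha with ha0 | ha0
    · have hb1 : b = 1 := by linarith
      rw [← ha0, hb1]
      simpa using hw
    rcases eq_or_lt_of_le hb with hb0 | hb0
    · have ha1 : a = 1 := by linarith
      rw [← hb0, ha1]
      simpa using hv
    by_contra hmem
    rw [Set.notMem_compl_iff] at hmem
    have hvC : ρ v 0 < 1/2 := by rw [hcompl] at hv; exact hv
    have hnv : -v ∈ C := by
      show 1/2 ≤ ρ (-v) 0
      rw [hneg]
      linarith
    have hbw : b • w ∈ C := by
      have := hCadd _ _ hmem (hCsmul a (-v) ha0 hnv)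
      have heq2 : (a • v + b • w) + a • (-v) = b • w := by
        funext k
        simp only [Pi.add_apply, Pi.smul_apply, Pi.neg_apply, smul_eq_mul]
        ring
      rw [heq2] at this
      exact this
    have hwC : w ∈ C := by
      have := hCsmul (1/b) (b • w) (by positivity) hbw
      rw [smul_smul, one_div, inv_mul_cancel₀ (ne_of_gt hb0), one_smul] at this
      exact this
    rw [hcompl] at hw
    have : (1:ℝ)/2 ≤ ρ w 0 := hwC
    have : ρ w 0 < 1/2 := hw
    linarith
  have hupdate_diff : ∀ (z : Fin n → ℝ) (k : Fin n) (a b : ℝ),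
      Function.update z k a - Function.update z k b = Pi.single k (a - b) := by
    intro z k a b
    funext m
    by_cases hm : m = k
    · rw [hm, Pi.sub_apply, Function.update_self, Function.update_self,
        Pi.single_eq_same]
    · rw [Pi.sub_apply, Function.update_of_ne hm, Function.update_of_ne hm,
        Pi.single_eq_of_ne hm, sub_self]
  have hDne : ∃ v, v ∈ Cᶜ := by
    have h0 := hnonnull ⟨0, by omega⟩
    rw [NullAttr] at h0
    push_neg at h0
    obtain ⟨x, y, z, hxyz⟩ := h0
    rw [hshift, hupdate_diff] at hxyz
    rcases lt_or_gt_of_ne hxyz with h | h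
    · exact ⟨_, by rw [hcompl]; exact h⟩
    · refine ⟨-(Pi.single (⟨0, by omega⟩ : Fin n) (x ⟨0, by omega⟩ - y ⟨0, by omega⟩)), ?_⟩
      rw [hcompl]
      show ρ _ 0 < 1/2
      rw [hneg]
      linarith
  obtain ⟨f, c, hfD, hfC⟩ :=
    geometric_hahn_banach_open hDconv hDopen hCconv disjoint_compl_left
  have hc0 : c ≤ 0 := by
    have := hfC 0 hC0
    simpa using this
  have hfC0 : ∀ v ∈ C, 0 ≤ f v := by
    intro v hv
    by_contra hneg'
    push_neg at hneg'
    set t := (|c| + 1)/(-(f v)) with htdef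
    have ht : 0 < t := div_pos (by positivity) (by linarith)
    have h1 := hfC (t • v) (hCsmul t v ht hv)
    rw [map_smul, smul_eq_mul] at h1
    have he : t * f v = -(|c|+1) := by
      rw [htdef, div_mul_eq_mul_div, div_neg, mul_div_assoc,
        div_self (ne_of_lt hneg'), mul_one]
    rw [he] at h1
    have h2 := neg_abs_le c
    linarith
  have hfD' : ∀ v, v ∉ C → f v < 0 := by
    intro v hv
    have := hfD v hv
    linarith
  have hiff : ∀ v : Fin n → ℝ, 1/2 ≤ ρ v 0 ↔ 0 ≤ f v := by
    intro v
    constructor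
    · exact fun h => hfC0 v h
    · intro h
      by_contra hc'
      have := hfD' v hc'
      linarith
  have hiff_lt : ∀ v : Fin n → ℝ, 1/2 < ρ v 0 ↔ 0 < f v := by
    intro v
    have h1 := hiff (-v)
    rw [hneg, map_neg] at h1
    constructor
    · intro h
      by_contra hc'
      push_neg at hc'
      have := h1.mpr (by linarith)
      linarith
    · intro h
      by_contra hc'
      push_neg at hc'
      have := h1.mp (by linarith)
      linarith
  have hiff_eq : ∀ v : Fin n → ℝ, ρ v 0 = 1/2 ↔ f v = 0 := by
    intro v
    constructor
    · intro h
      have h1 := (hiff v).mp (le_of_eq h.symm)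
      have h2 : ¬ (1/2 < ρ v 0) := by rw [h]; exact lt_irrefl _
      rw [hiff_lt] at h2
      linarith
    · intro h
      have h1 := (hiff v).mpr (le_of_eq h.symm)
      have h2 : ¬ (0 < f v) := by rw [h]; exact lt_irrefl _
      rw [← hiff_lt] at h2
      linarith
  set β : Fin n → ℝ := fun k => f (Pi.single k 1) with hβdef
  have hfsingle : ∀ (k : Fin n) (t : ℝ), f (Pi.single k t) = β k * t := by
    intro k t
    have : (Pi.single k t : Fin n → ℝ) = t • (Pi.single k 1 : Fin n → ℝ) := by
      funext m
      by_cases hm : m = k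
      · rw [hm, Pi.single_eq_same, Pi.smul_apply, Pi.single_eq_same,
          smul_eq_mul, mul_one]
      · rw [Pi.single_eq_of_ne hm, Pi.smul_apply, Pi.single_eq_of_ne hm,
          smul_eq_mul, mul_zero]
    rw [this, map_smul, smul_eq_mul, hβdef, mul_comm]
  have hfsum : ∀ v : Fin n → ℝ, f v = ∑ k, β k * v k := by
    intro v
    have hv : v = ∑ k, (v k) • (Pi.single k (1:ℝ) : Fin n → ℝ) := by
      funext m
      rw [Finset.sum_apply]
      rw [Finset.sum_eq_single m]
      · rw [Pi.smul_apply, Pi.single_eq_same, smul_eq_mul, mul_one]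
      · intro b _ hb
        rw [Pi.smul_apply, Pi.single_eq_of_ne (Ne.symm hb), smul_eq_mul, mul_zero]
      · intro hm; exact absurd (Finset.mem_univ m) hm
    conv_lhs => rw [hv]
    rw [map_sum]
    refine Finset.sum_congr rfl fun k _ => ?_
    rw [map_smul, smul_eq_mul, hβdef, mul_comm]
  have hβne : ∀ k, β k ≠ 0 := by
    intro k hk
    apply hnonnull k
    intro x y z
    rw [hshift, hupdate_diff]
    rw [hiff_eq, hfsingle, hk, zero_mul]
  -- the normalized function on difference space
  set toV : (Fin n → ℝ) → (Fin n → ℝ) := fun u k => u k / β k with htoVdef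
  set φh : (Fin n → ℝ) → ℝ := fun u => ρ (toV u) 0 with hφhdef
  have htoV_add : ∀ a b, toV (a + b) = toV a + toV b := by
    intro a b
    funext k
    simp only [htoVdef, Pi.add_apply]
    exact add_div _ _ _
  have htoV_smul : ∀ (t : ℝ) u, toV (t • u) = t • toV u := by
    intro t u
    funext k
    simp only [htoVdef, Pi.smul_apply, smul_eq_mul]
    exact mul_div_assoc _ _ _
  have htoV_neg : ∀ u, toV (-u) = -(toV u) := by
    intro u
    funext k
    simp only [htoVdef, Pi.neg_apply]
    exact neg_div _ _
  have htoV_ne : ∀ u : Fin n → ℝ, u ≠ 0 → toV u ≠ 0 := by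
    intro u hu hc
    apply hu
    funext k
    have : toV u k = 0 := by rw [hc]; rfl
    simp only [htoVdef] at this
    rcases div_eq_zero_iff.mp this with h | h
    · exact h
    · exact absurd h (hβne k)
  have hf_toV : ∀ u, f (toV u) = Su u := by
    intro u
    rw [hfsum, Su]
    refine Finset.sum_congr rfl fun k _ => ?_
    simp only [htoVdef]
    rw [mul_comm, div_mul_cancel₀ _ (hβne k)]
  have hgood : PhiGood n φh := by
    constructor
    · exact fun u => hρ.1 _ _
    · intro u t ht
      simp only [hφhdef]
      rw [htoV_smul, hscale_all _ t ht]
    · intro u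
      simp only [hφhdef]
      rw [htoV_neg, hneg]
    · apply hcontv.comp
      · apply Continuous.continuousOn
        apply continuous_pi
        intro k
        exact (continuous_apply k).div_const _
      · exact fun u hu => htoV_ne u hu
    · intro u
      simp only [hφhdef]
      rw [hiff, hf_toV]
    · intro a b ha hb
      have e1 : ρ (toV a + toV b) (toV b) = φh a := by
        rw [hshift, add_sub_cancel_right]
      have e2 : ρ (toV b) 0 = φh b := rfl
      have e3 : ρ (toV a + toV b) 0 = φh (a + b) := by
        show ρ (toV a + toV b) 0 = ρ (toV (a + b)) 0
        rw [htoV_add]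
      have h := hM3 (toV a + toV b) (toV b) 0 (by rw [e1]; exact ha) (by rw [e2]; exact hb)
      rw [e1, e2, e3] at h
      exact h
    · -- m4
      intro u hu_nonneg hu0 w
      have hsingle_eval : ∀ (v : Fin n → ℝ) (k : Fin n),
          ρ (Function.update (0 : Fin n → ℝ) k (v k)) 0 = ρ (Pi.single k (v k)) 0 := by
        intro v k
        rfl
      have hdom_char : ∀ v : Fin n → ℝ, DomD ρ (toV v) 0 ↔
          ((∀ k, 0 ≤ v k) ∧ ∃ k, 0 < v k) := by
        intro v
        have heval : ∀ k, ρ (Function.update (0 : Fin n → ℝ) k (toV v k)) 0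
            = ρ (Pi.single k (v k / β k)) 0 := by
          intro k
          rw [hsingle_eval (toV v) k]
        have hfk : ∀ k, f (Pi.single k (v k / β k)) = v k := by
          intro k
          rw [hfsingle, mul_comm, div_mul_cancel₀ _ (hβne k)]
        constructor
        · rintro ⟨hall, k, hk⟩
          constructor
          · intro k'
            have := hall k'
            rw [heval k', hiff, hfk] at this
            exact this
          · refine ⟨k, ?_⟩
            rw [heval k, hiff_lt, hfk] at hk
            exact hk
        · rintro ⟨hall, k, hk⟩
          constructor
          · intro k'
            rw [heval k', hiff, hfk]
            exact hall k'
          · refine ⟨k, ?_⟩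
            rw [heval k, hiff_lt, hfk]
            exact hk
      have hexpos : ∃ k, 0 < u k := by
        by_contra h
        push_neg at h
        apply hu0
        funext k
        exact le_antisymm (h k) (hu_nonneg k)
      have hdom : DomD ρ (toV u) 0 := (hdom_char u).mpr ⟨hu_nonneg, hexpos⟩
      have h := hM4 (toV u) 0 hdom (toV w) 0
      constructor
      · exact h.1
      · intro hnot
        apply h.2
        rw [hdom_char w]
        rintro ⟨hall, k, hk⟩
        exact hnot ⟨hall, fun hc => by rw [hc] at hk; exact lt_irrefl 0 hk⟩
    · -- m5
      intro u i j hij hhalfu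
      have hx'i : toV (mergeFn i j u) i = 0 := by
        simp only [htoVdef]
        rw [mergeFn_apply_i, zero_div]
      have hother : ∀ k, k ≠ i → k ≠ j → toV (mergeFn i j u) k = toV u k := by
        intro k h1 h2
        simp only [htoVdef]
        rw [mergeFn_apply_other h1 h2]
      have hcond : ∃ i', toV (mergeFn i j u) i' = (0 : Fin n → ℝ) i' ∧
          ∀ j1 j2, j1 ≠ i' → j2 ≠ i' → toV (mergeFn i j u) j1 ≠ toV u j1 →
            toV (mergeFn i j u) j2 ≠ toV u j2 → j1 = j2 := by
        refine ⟨i, by rw [hx'i]; rfl, ?_⟩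
        intro j1 j2 h1 h2 hd1 hd2
        have hj1 : j1 = j := by
          by_contra hc
          exact hd1 (hother j1 h1 hc)
        have hj2 : j2 = j := by
          by_contra hc
          exact hd2 (hother j2 h2 hc)
        rw [hj1, hj2]
      have hmid : ρ (toV (mergeFn i j u)) (toV u) = 1/2 := by
        rw [hshift, hiff_eq]
        have : toV (mergeFn i j u) - toV u = toV (mergeFn i j u - u) := by
          funext k
          simp only [htoVdef, Pi.sub_apply]
          rw [sub_div]
        rw [this, hf_toV]
        have h1 : Su (mergeFn i j u - u) = Su (mergeFn i j u) - Su u := by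
          simp [Su, Finset.sum_sub_distrib]
        rw [h1, Su_mergeFn hij, sub_self]
      have h := hM5 (toV u) 0 (toV (mergeFn i j u)) (by
        show 1/2 ≤ ρ (toV u) 0
        exact hhalfu) hcond hmid
      have e1 : ρ (toV u) 0 = φh u := rfl
      have e2 : ρ (toV (mergeFn i j u)) 0 = φh (mergeFn i j u) := rfl
      rw [e1, e2] at h
      exact h
  -- assemble the representation
  set ψ := psiF φh hn with hψdef
  refine ⟨fun r => ψ (max (-1) (min 1 r)), β, hβne, ?_, ?_, ?_, ?_⟩
  · -- continuity
    apply ContinuousOn.congr (hgood.psi_cont hn)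
    intro r hr
    show ψ (max (-1) (min 1 r)) = ψ r
    rw [min_eq_right hr.2, max_eq_right hr.1]
  · -- strict mono
    intro a ha b hb hab
    have ea : max (-1) (min 1 a) = a := by rw [min_eq_right ha.2, max_eq_right ha.1]
    have eb : max (-1) (min 1 b) = b := by rw [min_eq_right hb.2, max_eq_right hb.1]
    simp only [ea, eb]
    exact hgood.psi_strict hn ha hb hab
  · -- range and symmetry
    intro r hr
    have ea : max (-1) (min 1 r) = r := by rw [min_eq_right hr.2, max_eq_right hr.1]
    have eb : max (-1) (min 1 (-r)) = -r := by
      rw [min_eq_right (by linarith [hr.1]), max_eq_right (by linarith [hr.2])]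
    simp only [ea, eb]
    constructor
    · exact hgood.range01 _
    · have := hgood.psi_sym hn hr.1 hr.2
      rw [← hψdef] at this
      linarith
  · -- the formula
    intro x y hxy
    set u : Fin n → ℝ := fun k => β k * (x k - y k) with hudef
    have hu0 : u ≠ 0 := by
      intro hc
      apply hxy
      funext k
      have : u k = 0 := by rw [hc]; rfl
      simp only [hudef] at this
      rcases mul_eq_zero.mp this with h | h
      · exact absurd h (hβne k)
      · linarith [sub_eq_zero.mp h]
    have htoVu : toV u = x - y := by
      funext k
      simp only [htoVdef, hudef, Pi.sub_apply]
      exact mul_div_cancel_left₀ _ (hβne k)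
    have hval : ρ x y = φh u := by
      rw [hshift, ← htoVu]
    have hrep := hgood.phi_eq_psi hn hu0
    have hSu : Su u = ∑ k, β k * x k - ∑ k, β k * y k := by
      rw [Su, ← Finset.sum_sub_distrib]
      refine Finset.sum_congr rfl fun k _ => ?_
      simp only [hudef]
      ring
    have hNu : Nu u = ∑ k, |β k * (x k - y k)| := by
      rw [Nu]
    have hbound1 : -1 ≤ Su u / Nu u := by
      rw [le_div_iff₀ (Nu_pos hu0)]
      linarith [neg_Nu_le_Su u]
    have hbound2 : Su u / Nu u ≤ 1 := by
      rw [div_le_one (Nu_pos hu0)]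
      exact Su_le_Nu u
    have eclamp : max (-1) (min 1 ((∑ k, β k * x k - ∑ k, β k * y k)
        / ∑ k, |β k * (x k - y k)|)) = Su u / Nu u := by
      rw [← hSu, ← hNu, min_eq_right hbound2, max_eq_right hbound1]
    show ρ x y = ψ (max (-1) (min 1 ((∑ k, β k * x k - ∑ k, β k * y k)
        / ∑ k, |β k * (x k - y k)|)))
    rw [eclamp, hval, hrep, ← hψdef]
/-- Theorem 1 — characterization and uniqueness of the
L1-complexity representation for n > 2. -/
theorem stmt_3 {n : ℕ} (hn : 2 < n) (ρ : (Fin n → ℝ) → (Fin n → ℝ) → ℝ)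
    (hρ : IsBCR ρ) (hnonnull : ∀ k, ¬ NullAttr ρ k) :
    ((∃ G β, IsL1Rep ρ G β) ↔ (M1 ρ ∧ M2 ρ ∧ M3 ρ ∧ M4 ρ ∧ M5 ρ)) ∧
    (∀ G β G' β', IsL1Rep ρ G β → IsL1Rep ρ G' β' →
      Set.EqOn G' G (Set.Icc (-1) 1) ∧ ∃ C : ℝ, 0 < C ∧ β' = C • β) := by
  constructor
  · constructor
    · rintro ⟨G, β, h⟩
      exact ⟨rep_M1 h, rep_M2 hρ h, rep_M3 hρ h, rep_M4 hρ h, rep_M5 hρ h⟩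
    · rintro ⟨h1, h2, h3, h4, h5⟩
      exact axioms_to_rep hn hρ hnonnull h1 h2 h3 h4 h5
  · intro G β G' β' h h'
    exact rep_unique hn hρ h h'
end

section
/- Let x and y be distinct finite-support lotteries over ℝ, let u : ℝ → ℝ be strictly increasing, and let H : [0,1] → ℝ be continuous and strictly increasing with H(0) = 0. Then the maximum over couplings g ∈ Γ(x,y) of H( |Σ_{w_x,w_y} g(w_x,w_y)·(u(w_x) − u(w_y))| / Σ_{w_x,w_y} g(w_x,w_y)·|u(w_x) − u(w_y)| ) is attained and equals H( |EU(x) − EU(y)| / d_CDF(x,y) ). -/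
open Finset

/-- A finite-support lottery over ℝ. -/
structure Lottery where
  f : ℝ →₀ ℝ
  nonneg : ∀ w, 0 ≤ f w
  sum_one : f.sum (fun _ p => p) = 1

namespace Lottery

/-- The CDF of a lottery. -/
noncomputable def cdf (x : Lottery) (w : ℝ) : ℝ :=
  ∑ w' ∈ x.f.support.filter (fun w' => w' ≤ w), x.f w'

/-- The quantile function of a lottery. -/
noncomputable def quantile (x : Lottery) (q : ℝ) : ℝ :=
  sInf {w : ℝ | q ≤ x.cdf w}

/-- Expected utility. -/
noncomputable def EU (u : ℝ → ℝ) (x : Lottery) : ℝ :=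
  x.f.sum (fun w p => p * u w)

/-- The CDF distance d_CDF. -/
noncomputable def dCDF (u : ℝ → ℝ) (x y : Lottery) : ℝ :=
  ∫ q in (0:ℝ)..1, |u (x.quantile q) - u (y.quantile q)|

/-- First-order stochastic dominance. -/
def FOSD (x y : Lottery) : Prop := ∀ w, x.cdf w ≤ y.cdf w

/-- The topology of weak convergence of the associated probability measures:
the topology induced by testing against bounded continuous functions. -/
instance : TopologicalSpace Lottery :=
  TopologicalSpace.induced
    (fun x => fun g : BoundedContinuousFunction ℝ ℝ => x.f.sum (fun w p => p * g w))
    inferInstance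

end Lottery

/-- Γ(x,y): the set of couplings of two lotteries. -/
def IsCoupling (x y : Lottery) (g : (ℝ × ℝ) →₀ ℝ) : Prop :=
  (∀ p, 0 ≤ g p ∧ g p ≤ 1) ∧
  (∀ w : ℝ, (g.sum fun p v => if p.1 = w then v else 0) = x.f w) ∧
  (∀ w : ℝ, (g.sum fun p v => if p.2 = w then v else 0) = y.f w)

/-- The ease-of-comparison value of the attribute representation induced by a coupling. -/
noncomputable def couplingVal (H u : ℝ → ℝ) (g : (ℝ × ℝ) →₀ ℝ) : ℝ :=
  H (|g.sum fun p v => v * (u p.1 - u p.2)| / g.sum fun p v => v * |u p.1 - u p.2|)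

/-!
Under every coupling `g` the numerator `Σ g (u w_x - u w_y)` is `EU x - EU y`, so only the
denominator `D g = Σ g |u w_x - u w_y|` varies. Writing `|a - b| = ∫ |𝟙[a ≤ t] - 𝟙[b ≤ t]| dt`
gives `D g ≥ ∫ |G_x - G_y|`, where `G_x`, `G_y` are the CDFs of the utilities. The comonotone
(quantile) coupling has monotone support, so at each `t` the integrand has one sign and the bound
is attained; splitting `(0, 1]` into the cells where both quantile functions are constant shows
that its `D` is `d_CDF`.
Since `|EU x - EU y| ≤ d_CDF`, both ratios lie in `[0, 1]` where `H` is monotone.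
-/

open MeasureTheory Function

theorem Finset.exists_sum_filter_lt_lt_le_sum_filter_le {α β : Type*} [LinearOrder α]
    [AddCommMonoid β] [LinearOrder β] (s : Finset α) (f : α → β) {q : β} (hq : 0 < q)
    (hqs : q ≤ ∑ a ∈ s, f a) :
    ∃ w ∈ s, ∑ a ∈ s.filter (· < w), f a < q ∧ q ≤ ∑ a ∈ s.filter (· ≤ w), f a := by
  classical
  induction s using Finset.induction_on_max with
  | empty => exact absurd (hqs.trans_lt hq) (by simp)
  | insert a s ha ih =>
    by_cases hq' : q ≤ ∑ b ∈ s, f b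
    · obtain ⟨w, hw, hlt, hle⟩ := ih hq'
      have hwa := ha w hw
      refine ⟨w, mem_insert_of_mem hw, ?_, ?_⟩
      · rwa [filter_insert, if_neg (not_lt.2 hwa.le)]
      · rwa [filter_insert, if_neg (not_le.2 hwa)]
    · refine ⟨a, mem_insert_self a s, ?_, ?_⟩
      · rwa [filter_insert, if_neg (lt_irrefl a), filter_true_of_mem ha, ← not_le]
      · rwa [filter_true_of_mem fun b hb => ?_]
        rcases mem_insert.1 hb with rfl | hb
        exacts [le_rfl, (ha b hb).le]

theorem MeasureTheory.sum_measureReal_inter_of_subset_biUnion {α ι : Type*} [MeasurableSpace α]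
    {μ : Measure α} {s : Finset ι} {B : ι → Set α} (hd : (s : Set ι).PairwiseDisjoint B)
    (hB : ∀ i ∈ s, MeasurableSet (B i)) {A : Set α} (hAm : MeasurableSet A) (hA : μ A ≠ ⊤)
    (hAB : A ⊆ ⋃ i ∈ s, B i) : ∑ i ∈ s, μ.real (A ∩ B i) = μ.real A := by
  rw [← measureReal_biUnion_finset (hd.mono fun i => Set.inter_subset_right)
      (fun i hi => hAm.inter (hB i hi))
      (fun i _ => measure_ne_top_of_subset Set.inter_subset_left hA),
    ← Set.inter_iUnion₂, Set.inter_eq_left.2 hAB]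

theorem MeasureTheory.setIntegral_biUnion_eq_sum_of_eqOn {α ι : Type*} [MeasurableSpace α]
    {μ : Measure α} (s : Finset ι) {J : ι → Set α} (hd : (s : Set ι).Pairwise (Disjoint on J))
    (hJ : ∀ i ∈ s, MeasurableSet (J i)) (hfin : ∀ i ∈ s, μ (J i) ≠ ⊤) {f : α → ℝ} {c : ι → ℝ}
    (hf : ∀ i ∈ s, Set.EqOn f (fun _ => c i) (J i)) :
    ∫ a in ⋃ i ∈ s, J i, f a ∂μ = ∑ i ∈ s, μ.real (J i) * c i := by
  rw [integral_biUnion_finset s hJ hd fun i hi =>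
    (integrableOn_const (hfin i hi)).congr_fun (hf i hi).symm (hJ i hi)]
  refine sum_congr rfl fun i hi => ?_
  rw [setIntegral_congr_fun (hJ i hi) (hf i hi), setIntegral_const, smul_eq_mul]

theorem Finsupp.abs_sum_mul_le {α : Type*} (g : α →₀ ℝ) (hg : ∀ a, 0 ≤ g a) (φ : α → ℝ) :
    |g.sum fun a v => v * φ a| ≤ g.sum fun a v => v * |φ a| :=
  (abs_sum_le_sum_abs _ _).trans_eq <|
    Finset.sum_congr rfl fun a _ => by rw [abs_mul, abs_of_nonneg (hg a)]

theorem Finsupp.abs_sum_mul_eq {α : Type*} (g : α →₀ ℝ) (hg : ∀ a, 0 ≤ g a) (φ : α → ℝ)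
    (hφ : (∀ a ∈ g.support, 0 ≤ φ a) ∨ ∀ a ∈ g.support, φ a ≤ 0) :
    |g.sum fun a v => v * φ a| = g.sum fun a v => v * |φ a| := by
  rcases hφ with hφ | hφ
  · rw [Finsupp.sum, abs_sum_of_nonneg fun a ha => mul_nonneg (hg a) (hφ a ha)]
    exact Finset.sum_congr rfl fun a ha => by simp only [abs_of_nonneg (hφ a ha)]
  · rw [Finsupp.sum, ← abs_neg, ← sum_neg_distrib,
      abs_sum_of_nonneg fun a ha => neg_nonneg.2 (mul_nonpos_of_nonneg_of_nonpos (hg a) (hφ a ha))]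
    exact Finset.sum_congr rfl fun a ha => by simp only [abs_of_nonpos (hφ a ha), mul_neg]

theorem div_le_div_of_le_of_le {a b c : ℝ} (ha : 0 ≤ a) (hab : a ≤ b) (hbc : b ≤ c) :
    a / c ≤ a / b := by
  rcases ha.eq_or_lt with rfl | ha
  · simp
  · exact div_le_div_of_nonneg_left ha.le (ha.trans_le hab) hbc

noncomputable def stepDiff (a b t : ℝ) : ℝ :=
  (Set.Ici a).indicator 1 t - (Set.Ici b).indicator 1 t

theorem abs_stepDiff (a b : ℝ) :
    (fun t => |stepDiff a b t|) = (Set.Ico (min a b) (max a b)).indicator 1 := by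
  wlog h : a ≤ b generalizing a b
  · simpa only [stepDiff, abs_sub_comm, min_comm, max_comm] using this b a (le_of_not_ge h)
  have hIco : stepDiff a b = (Set.Ico a b).indicator 1 := by
    rw [← Set.Ici_sdiff_Ici, Set.indicator_sdiff (Set.Ici_subset_Ici.2 h)]
    rfl
  ext t
  rw [min_eq_left h, max_eq_right h, hIco]
  exact abs_of_nonneg (Set.indicator_nonneg (fun _ _ => zero_le_one) t)

theorem integrable_abs_stepDiff (a b : ℝ) : Integrable fun t => |stepDiff a b t| := by
  rw [abs_stepDiff]
  exact (integrable_indicator_iff measurableSet_Ico).2 (integrableOn_const measure_Ico_lt_top.ne)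

theorem integral_abs_stepDiff (a b : ℝ) : ∫ t, |stepDiff a b t| = |a - b| := by
  rw [abs_stepDiff, integral_indicator_one measurableSet_Ico,
    Real.volume_real_Ico_of_le min_le_max, max_sub_min_eq_abs']

theorem le_and_lt_of_stepDiff_pos {a b t : ℝ} (h : 0 < stepDiff a b t) : a ≤ t ∧ t < b := by
  simp only [stepDiff, Set.indicator_apply, Set.mem_Ici, Pi.one_apply] at h
  split_ifs at h with ha hb <;> first | exact ⟨ha, not_le.1 hb⟩ | norm_num at h

theorem sum_mul_abs_sub_eq_integral_stepDiff (g : (ℝ × ℝ) →₀ ℝ) (u : ℝ → ℝ) :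
    (g.sum fun p v => v * |u p.1 - u p.2|) =
      ∫ t, g.sum fun p v => v * |stepDiff (u p.1) (u p.2) t| := by
  unfold Finsupp.sum
  rw [integral_finsetSum _ fun p _ => (integrable_abs_stepDiff _ _).const_mul _]
  exact sum_congr rfl fun p _ => by rw [integral_const_mul, integral_abs_stepDiff]

namespace Lottery

noncomputable def utilityCDF (u : ℝ → ℝ) (x : Lottery) (t : ℝ) : ℝ :=
  x.f.sum fun w v => v * (Set.Ici (u w)).indicator 1 t

variable (x : Lottery)

noncomputable def cdfLt (w : ℝ) : ℝ :=
  ∑ w' ∈ x.f.support.filter (fun w' => w' < w), x.f w'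

/-- The quantile function equals `w` exactly on this interval of probability levels. -/
def quantileInterval (w : ℝ) : Set ℝ :=
  Set.Ioc (x.cdfLt w) (x.cdf w)

theorem cdf_eq_cdfLt_add (w : ℝ) : x.cdf w = x.cdfLt w + x.f w := by
  have hsplit : ∀ w', (if w' ≤ w then x.f w' else 0) =
      (if w' < w then x.f w' else 0) + (if w' = w then x.f w' else 0) := by
    intro w'
    rcases lt_trichotomy w' w with h | rfl | h
    · simp [h, h.le, h.ne]
    · simp
    · simp [h.not_ge, h.not_gt, h.ne']
  rw [cdf, cdfLt, sum_filter, sum_filter, sum_congr rfl fun w' _ => hsplit w', sum_add_distrib]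
  congr 1
  exact x.f.sum_ite_self_eq' w

theorem cdf_le_cdfLt {w v : ℝ} (h : w < v) : x.cdf w ≤ x.cdfLt v :=
  sum_le_sum_of_subset_of_nonneg (monotone_filter_right _ fun _ _ hle => hle.trans_lt h)
    fun w' _ _ => x.nonneg w'

theorem cdfLt_nonneg (w : ℝ) : 0 ≤ x.cdfLt w :=
  sum_nonneg fun w' _ => x.nonneg w'

theorem cdf_le_one (w : ℝ) : x.cdf w ≤ 1 :=
  x.sum_one ▸ sum_le_sum_of_subset_of_nonneg (filter_subset _ _) fun w' _ _ => x.nonneg w'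

theorem quantileInterval_subset_Ioc (w : ℝ) : x.quantileInterval w ⊆ Set.Ioc 0 1 :=
  Set.Ioc_subset_Ioc (x.cdfLt_nonneg w) (x.cdf_le_one w)

theorem volume_real_quantileInterval (w : ℝ) : volume.real (x.quantileInterval w) = x.f w := by
  have h := x.cdf_eq_cdfLt_add w
  rw [quantileInterval, Real.volume_real_Ioc_of_le (h ▸ le_add_of_nonneg_right (x.nonneg w)), h,
    add_sub_cancel_left]

theorem lt_of_mem_quantileInterval {w v q q' : ℝ} (h : w < v) (hq : q ∈ x.quantileInterval w)
    (hq' : q' ∈ x.quantileInterval v) : q < q' :=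
  hq.2.trans_lt ((x.cdf_le_cdfLt h).trans_lt hq'.1)

theorem pairwise_disjoint_quantileInterval : Pairwise (Disjoint on x.quantileInterval) := by
  intro w v hwv
  refine Set.disjoint_left.2 fun q hw hv => ?_
  rcases hwv.lt_or_gt with h | h
  · exact lt_irrefl q (x.lt_of_mem_quantileInterval h hw hv)
  · exact lt_irrefl q (x.lt_of_mem_quantileInterval h hv hw)

theorem biUnion_quantileInterval : ⋃ w ∈ x.f.support, x.quantileInterval w = Set.Ioc 0 1 := by
  refine (Set.iUnion₂_subset fun w _ => x.quantileInterval_subset_Ioc w).antisymm fun q hq => ?_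
  have hsum : ∑ w ∈ x.f.support, x.f w = 1 := x.sum_one
  obtain ⟨w, hw, hlt, hle⟩ :=
    x.f.support.exists_sum_filter_lt_lt_le_sum_filter_le x.f hq.1 (hsum ▸ hq.2)
  exact Set.mem_biUnion hw ⟨hlt, hle⟩

theorem quantile_eq_of_mem_quantileInterval {w q : ℝ} (hq : q ∈ x.quantileInterval w) :
    x.quantile q = w := by
  have hlb : ∀ v ∈ {v : ℝ | q ≤ x.cdf v}, w ≤ v := fun v hv =>
    not_lt.1 fun hvw => (hq.1.trans_le hv).not_ge (x.cdf_le_cdfLt hvw)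
  exact le_antisymm (csInf_le ⟨w, hlb⟩ hq.2) (le_csInf ⟨w, hq.2⟩ hlb)

theorem quantileInterval_eq_empty {w : ℝ} (hw : w ∉ x.f.support) :
    x.quantileInterval w = ∅ := by
  rw [quantileInterval, cdf_eq_cdfLt_add, Finsupp.notMem_support_iff.1 hw, add_zero,
    Set.Ioc_self]

end Lottery

namespace IsCoupling

variable {x y : Lottery} {g : (ℝ × ℝ) →₀ ℝ}

theorem mapDomain_fst (hg : IsCoupling x y g) : g.mapDomain Prod.fst = x.f := by
  ext w
  simpa [Finsupp.mapDomain, Finsupp.sum_apply, Finsupp.single_apply] using hg.2.1 w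

theorem mapDomain_snd (hg : IsCoupling x y g) : g.mapDomain Prod.snd = y.f := by
  ext w
  simpa [Finsupp.mapDomain, Finsupp.sum_apply, Finsupp.single_apply] using hg.2.2 w

theorem sum_mul_sub (hg : IsCoupling x y g) (φ : ℝ → ℝ) :
    (g.sum fun p v => v * (φ p.1 - φ p.2)) =
      (x.f.sum fun w v => v * φ w) - y.f.sum fun w v => v * φ w := by
  rw [← hg.mapDomain_fst, ← hg.mapDomain_snd,
    Finsupp.sum_mapDomain_index (fun _ => zero_mul _) (fun _ _ _ => add_mul _ _ _),
    Finsupp.sum_mapDomain_index (fun _ => zero_mul _) (fun _ _ _ => add_mul _ _ _),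
    ← Finsupp.sum_sub]
  simp only [mul_sub]

theorem sum_mul_sub_eq_EU_sub (hg : IsCoupling x y g) (u : ℝ → ℝ) :
    (g.sum fun p v => v * (u p.1 - u p.2)) = Lottery.EU u x - Lottery.EU u y :=
  hg.sum_mul_sub u

theorem sum_mul_stepDiff (hg : IsCoupling x y g) (u : ℝ → ℝ) (t : ℝ) :
    (g.sum fun p v => v * stepDiff (u p.1) (u p.2) t) =
      Lottery.utilityCDF u x t - Lottery.utilityCDF u y t :=
  hg.sum_mul_sub fun w => (Set.Ici (u w)).indicator 1 t

theorem integral_abs_utilityCDF_sub_le (hg : IsCoupling x y g) (u : ℝ → ℝ) :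
    ∫ t, |Lottery.utilityCDF u x t - Lottery.utilityCDF u y t| ≤
      g.sum fun p v => v * |u p.1 - u p.2| := by
  rw [sum_mul_abs_sub_eq_integral_stepDiff]
  refine integral_mono_of_nonneg (Filter.Eventually.of_forall fun t => abs_nonneg _)
    (integrable_finsetSum _ fun p _ => (integrable_abs_stepDiff _ _).const_mul _)
    (Filter.Eventually.of_forall fun t => ?_)
  dsimp only
  rw [← hg.sum_mul_stepDiff u t]
  exact g.abs_sum_mul_le (fun p => (hg.1 p).1) _

end IsCoupling

section quantileCoupling

variable (x y : Lottery)

def quantileCell (p : ℝ × ℝ) : Set ℝ :=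
  x.quantileInterval p.1 ∩ y.quantileInterval p.2

theorem measurableSet_quantileCell (p : ℝ × ℝ) : MeasurableSet (quantileCell x y p) :=
  measurableSet_Ioc.inter measurableSet_Ioc

theorem quantileCell_subset_Ioc (p : ℝ × ℝ) : quantileCell x y p ⊆ Set.Ioc 0 1 :=
  Set.inter_subset_left.trans (x.quantileInterval_subset_Ioc _)

theorem pairwise_disjoint_quantileCell : Pairwise (Disjoint on quantileCell x y) := by
  intro p p' hne
  rcases not_and_or.1 (mt Prod.ext_iff.2 hne) with h | h
  · exact (x.pairwise_disjoint_quantileInterval h).mono Set.inter_subset_left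
      Set.inter_subset_left
  · exact (y.pairwise_disjoint_quantileInterval h).mono Set.inter_subset_right
      Set.inter_subset_right

theorem biUnion_quantileCell :
    ⋃ p ∈ x.f.support ×ˢ y.f.support, quantileCell x y p = Set.Ioc 0 1 := by
  rw [← Set.inter_self (Set.Ioc (0 : ℝ) 1)]
  nth_rw 1 [← x.biUnion_quantileInterval]
  rw [← y.biUnion_quantileInterval]
  ext q
  simp only [quantileCell, Set.mem_iUnion, Set.mem_inter_iff, mem_product, exists_prop,
    Prod.exists]
  constructor
  · rintro ⟨a, b, ⟨ha, hb⟩, hqa, hqb⟩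
    exact ⟨⟨a, ha, hqa⟩, b, hb, hqb⟩
  · rintro ⟨⟨a, ha, hqa⟩, b, hb, hqb⟩
    exact ⟨a, b, ⟨ha, hb⟩, hqa, hqb⟩

/-- The comonotone coupling: level `q ∈ (0, 1]` is sent to the pair of quantiles at `q`. -/
noncomputable def quantileCoupling : (ℝ × ℝ) →₀ ℝ :=
  Finsupp.onFinset (x.f.support ×ˢ y.f.support) (fun p => volume.real (quantileCell x y p))
    fun p hp => by
      by_contra h
      rcases not_and_or.1 (mem_product.not.1 h) with h | h
      · exact hp (by
          rw [quantileCell, x.quantileInterval_eq_empty h, Set.empty_inter, measureReal_empty])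
      · exact hp (by
          rw [quantileCell, y.quantileInterval_eq_empty h, Set.inter_empty, measureReal_empty])

theorem quantileCoupling_apply (p : ℝ × ℝ) :
    quantileCoupling x y p = volume.real (quantileCell x y p) :=
  rfl

theorem support_quantileCoupling_subset :
    (quantileCoupling x y).support ⊆ x.f.support ×ˢ y.f.support :=
  Finsupp.support_onFinset_subset

theorem quantileCoupling_marginal_fst (a : ℝ) :
    ∑ b ∈ y.f.support, quantileCoupling x y (a, b) = x.f a := by
  simp only [quantileCoupling_apply, quantileCell]
  rw [← x.volume_real_quantileInterval a]
  exact sum_measureReal_inter_of_subset_biUnion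
    (y.pairwise_disjoint_quantileInterval.set_pairwise _) (fun _ _ => measurableSet_Ioc)
    measurableSet_Ioc measure_Ioc_lt_top.ne
    (y.biUnion_quantileInterval ▸ x.quantileInterval_subset_Ioc a)

theorem quantileCoupling_marginal_snd (b : ℝ) :
    ∑ a ∈ x.f.support, quantileCoupling x y (a, b) = y.f b := by
  simp only [quantileCoupling_apply, quantileCell, Set.inter_comm (x.quantileInterval _)]
  rw [← y.volume_real_quantileInterval b]
  exact sum_measureReal_inter_of_subset_biUnion
    (x.pairwise_disjoint_quantileInterval.set_pairwise _) (fun _ _ => measurableSet_Ioc)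
    measurableSet_Ioc measure_Ioc_lt_top.ne
    (x.biUnion_quantileInterval ▸ y.quantileInterval_subset_Ioc b)

theorem isCoupling_quantileCoupling : IsCoupling x y (quantileCoupling x y) := by
  refine ⟨fun p => ⟨measureReal_nonneg, ?_⟩, fun w => ?_, fun w => ?_⟩
  · calc quantileCoupling x y p ≤ volume.real (Set.Ioc (0 : ℝ) 1) :=
          measureReal_mono (quantileCell_subset_Ioc x y p) measure_Ioc_lt_top.ne
      _ = 1 := by simp
  · rw [Finsupp.sum_of_support_subset _ (support_quantileCoupling_subset x y) _
      fun _ _ => by simp, sum_product]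
    refine (sum_congr rfl fun a _ => ?_).trans (x.f.sum_ite_self_eq' w)
    by_cases h : a = w <;> simp [h, quantileCoupling_marginal_fst]
  · rw [Finsupp.sum_of_support_subset _ (support_quantileCoupling_subset x y) _
      fun _ _ => by simp, sum_product_right]
    refine (sum_congr rfl fun b _ => ?_).trans (y.f.sum_ite_self_eq' w)
    by_cases h : b = w <;> simp [h, quantileCoupling_marginal_snd]

theorem dCDF_eq_sum_quantileCoupling (u : ℝ → ℝ) :
    Lottery.dCDF u x y = (quantileCoupling x y).sum fun p v => v * |u p.1 - u p.2| := by
  have hconst : ∀ p ∈ x.f.support ×ˢ y.f.support, Set.EqOn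
      (fun q => |u (x.quantile q) - u (y.quantile q)|) (fun _ => |u p.1 - u p.2|)
      (quantileCell x y p) := fun p _ q hq => by
    simp only [x.quantile_eq_of_mem_quantileInterval hq.1,
      y.quantile_eq_of_mem_quantileInterval hq.2]
  rw [Lottery.dCDF, intervalIntegral.integral_of_le zero_le_one, ← biUnion_quantileCell x y,
    setIntegral_biUnion_eq_sum_of_eqOn _ ((pairwise_disjoint_quantileCell x y).set_pairwise _)
      (fun p _ => measurableSet_quantileCell x y p)
      (fun p _ => measure_ne_top_of_subset (quantileCell_subset_Ioc x y p)
        measure_Ioc_lt_top.ne) hconst,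
    Finsupp.sum_of_support_subset _ (support_quantileCoupling_subset x y) _ fun _ _ => by simp]
  rfl

theorem quantileCoupling_support_snd_le_of_fst_lt {p p' : ℝ × ℝ}
    (hp : p ∈ (quantileCoupling x y).support) (hp' : p' ∈ (quantileCoupling x y).support)
    (h : p.1 < p'.1) : p.2 ≤ p'.2 := by
  have hne : ∀ p ∈ (quantileCoupling x y).support, (quantileCell x y p).Nonempty := fun p hp =>
    Set.nonempty_iff_ne_empty.2 fun he =>
      Finsupp.mem_support_iff.1 hp (by rw [quantileCoupling_apply, he, measureReal_empty])
  obtain ⟨q, hqx, hqy⟩ := hne p hp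
  obtain ⟨q', hqx', hqy'⟩ := hne p' hp'
  exact not_lt.1 fun h' => lt_asymm (x.lt_of_mem_quantileInterval h hqx hqx')
    (y.lt_of_mem_quantileInterval h' hqy' hqy)

theorem quantileCoupling_stepDiff_nonneg_or_nonpos {u : ℝ → ℝ} (hu : StrictMono u) (t : ℝ) :
    (∀ p ∈ (quantileCoupling x y).support, 0 ≤ stepDiff (u p.1) (u p.2) t) ∨
      ∀ p ∈ (quantileCoupling x y).support, stepDiff (u p.1) (u p.2) t ≤ 0 := by
  by_contra! ⟨⟨p, hp, hneg⟩, p', hp', hpos⟩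
  rw [← neg_pos, stepDiff, neg_sub] at hneg
  obtain ⟨h2, h1⟩ := le_and_lt_of_stepDiff_pos hneg
  obtain ⟨h1', h2'⟩ := le_and_lt_of_stepDiff_pos hpos
  exact (quantileCoupling_support_snd_le_of_fst_lt x y hp' hp
    (hu.lt_iff_lt.1 (h1'.trans_lt h1))).not_gt (hu.lt_iff_lt.1 (h2.trans_lt h2'))

theorem sum_quantileCoupling_mul_abs_sub_eq_integral {u : ℝ → ℝ} (hu : StrictMono u) :
    ((quantileCoupling x y).sum fun p v => v * |u p.1 - u p.2|) =
      ∫ t, |Lottery.utilityCDF u x t - Lottery.utilityCDF u y t| := by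
  rw [sum_mul_abs_sub_eq_integral_stepDiff]
  congr 1
  ext t
  rw [← (isCoupling_quantileCoupling x y).sum_mul_stepDiff u t,
    Finsupp.abs_sum_mul_eq _ (fun _ => measureReal_nonneg) _
      (quantileCoupling_stepDiff_nonneg_or_nonpos x y hu t)]

end quantileCoupling

theorem stmt_9_general (x y : Lottery) (u : ℝ → ℝ) (hu : StrictMono u)
    (H : ℝ → ℝ) (hHm : StrictMonoOn H (Set.Icc 0 1)) :
    ∃ g : (ℝ × ℝ) →₀ ℝ, IsCoupling x y g ∧
      couplingVal H u g =
        H (|Lottery.EU u x - Lottery.EU u y| / Lottery.dCDF u x y) ∧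
      ∀ g' : (ℝ × ℝ) →₀ ℝ, IsCoupling x y g' →
        couplingVal H u g' ≤
          H (|Lottery.EU u x - Lottery.EU u y| / Lottery.dCDF u x y) := by
  have hq := isCoupling_quantileCoupling x y
  have hdCDF := dCDF_eq_sum_quantileCoupling x y u
  refine ⟨quantileCoupling x y, hq, by rw [couplingVal, hq.sum_mul_sub_eq_EU_sub, hdCDF],
    fun g hg => ?_⟩
  have hEU : |Lottery.EU u x - Lottery.EU u y| ≤ Lottery.dCDF u x y := by
    rw [hdCDF, ← hq.sum_mul_sub_eq_EU_sub]
    exact Finsupp.abs_sum_mul_le _ (fun p => (hq.1 p).1) _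
  have hmin : Lottery.dCDF u x y ≤ g.sum fun p v => v * |u p.1 - u p.2| := by
    rw [hdCDF, sum_quantileCoupling_mul_abs_sub_eq_integral x y hu]
    exact hg.integral_abs_utilityCDF_sub_le u
  have hEU0 := abs_nonneg (Lottery.EU u x - Lottery.EU u y)
  rw [couplingVal, hg.sum_mul_sub_eq_EU_sub]
  exact hHm.monotoneOn (unitInterval.div_mem hEU0 (hEU0.trans (hEU.trans hmin)) (hEU.trans hmin))
    (unitInterval.div_mem hEU0 (hEU0.trans hEU) hEU) (div_le_div_of_le_of_le hEU0 hEU hmin)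

/-- Proposition 7 — the maximal L1 ease of comparison over couplings
of two lotteries is attained and equals the CDF-complexity value. -/
theorem stmt_9 (x y : Lottery) (hxy : x ≠ y) (u : ℝ → ℝ) (hu : StrictMono u)
    (H : ℝ → ℝ) (hHc : ContinuousOn H (Set.Icc 0 1))
    (hHm : StrictMonoOn H (Set.Icc 0 1)) (hH0 : H 0 = 0) :
    ∃ g : (ℝ × ℝ) →₀ ℝ, IsCoupling x y g ∧
      couplingVal H u g =
        H (|Lottery.EU u x - Lottery.EU u y| / Lottery.dCDF u x y) ∧
      ∀ g' : (ℝ × ℝ) →₀ ℝ, IsCoupling x y g' →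
        couplingVal H u g' ≤
          H (|Lottery.EU u x - Lottery.EU u y| / Lottery.dCDF u x y) :=
  stmt_9_general x y u hu H hHm
end
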